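/- arXiv:1812.08186 — 6 statements merged into one kernel-verified Lean document; each statement's English description precedes it below -/
import Mathlib

section
/- The minimum Hamming weight of a nonzero codeword of the cycle code C_m equals m−1. -/
/-- The cycle code `C_m` on the complete graph `K_m`: edge-labelings `x` over `F_2`
(symmetric, zero on the diagonal) satisfying the triangle parity checks
`x i j + x j k + x i k = 0` for all `i < j < k`. -/
def cycleCode (m : ℕ) : Submodule (ZMod 2) (Fin m → Fin m → ZMod 2) where
  carrier := {x | (∀ i, x i i = 0) ∧ (∀ i j, x i j = x j i) ∧
    ∀ i j k : Fin m, i < j → j < k → x i j + x j k + x i k = 0}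
  zero_mem' := ⟨fun _ => rfl, fun _ _ => rfl, fun _ _ _ _ _ => by simp⟩
  add_mem' := by
    rintro a b ⟨ha1, ha2, ha3⟩ ⟨hb1, hb2, hb3⟩
    refine ⟨fun i => by simp [ha1 i, hb1 i], fun i j => by simp [ha2 i j, hb2 i j],
      fun i j k hij hjk => ?_⟩
    have h1 := ha3 i j k hij hjk
    have h2 := hb3 i j k hij hjk
    simp only [Pi.add_apply]
    linear_combination h1 + h2
  smul_mem' := by
    rintro c x ⟨h1, h2, h3⟩
    refine ⟨fun i => by simp [h1 i], fun i j => by simp [h2 i j],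
      fun i j k hij hjk => ?_⟩
    have h := h3 i j k hij hjk
    simp only [Pi.smul_apply, smul_eq_mul]
    linear_combination c * h

/-- The Hamming weight of an edge-labeling: the number of edges `{i,j}` (with `i < j`)
carrying the label `1`. -/
def edgeWeight {m : ℕ} (x : Fin m → Fin m → ZMod 2) : ℕ :=
  (Finset.univ.filter fun p : Fin m × Fin m => p.1 < p.2 ∧ x p.1 p.2 = 1).card

/-! Every codeword is the cut vector `x i j = a i + a j` of a vertex colouring `a` normalised to
vanish at the first vertex, since the triangle checks through that vertex express `x i j` as
`x i₀ i + x i₀ j`. Sending a cut edge to its (colour 1, colour 0) endpoint pair shows that a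
colouring with `k` ones cuts `k (m - k)` edges, which is at least `m - 1` for `1 ≤ k ≤ m - 1`,
with equality for a single vertex. -/

open Finset

lemma ZMod.eq_zero_or_eq_one (u : ZMod 2) : u = 0 ∨ u = 1 := by
  revert u; decide

variable {m : ℕ}

def cutVector (a : Fin m → ZMod 2) : Fin m → Fin m → ZMod 2 := fun i j => a i + a j

@[simp]
lemma cutVector_apply (a : Fin m → ZMod 2) (i j : Fin m) : cutVector a i j = a i + a j := rfl

@[simp]
lemma cutVector_zero : cutVector (0 : Fin m → ZMod 2) = 0 := by
  ext; simp

lemma cutVector_mem_cycleCode (a : Fin m → ZMod 2) : cutVector a ∈ cycleCode m :=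
  ⟨fun i => CharTwo.add_self_eq_zero (a i), fun i j => add_comm _ _, fun i j k _ _ => by
    simp only [cutVector_apply]
    linear_combination (a i + a j + a k) * CharTwo.two_eq_zero (R := ZMod 2)⟩

lemma exists_cutVector_of_mem_cycleCode {x : Fin m → Fin m → ZMod 2} (hx : x ∈ cycleCode m)
    {i₀ : Fin m} (hi₀ : IsBot i₀) : ∃ a, a i₀ = 0 ∧ x = cutVector a := by
  obtain ⟨hdiag, hsymm, htri⟩ := hx
  have hlt : ∀ i j, i < j → x i j = x i₀ i + x i₀ j := by
    intro i j hij
    rcases (hi₀ i).lt_or_eq with hi | rfl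
    · linear_combination htri i₀ i j hi hij - (x i₀ i + x i₀ j) * CharTwo.two_eq_zero (R := ZMod 2)
    · simp [hdiag]
  refine ⟨x i₀, hdiag i₀, funext₂ fun i j => ?_⟩
  rcases lt_trichotomy i j with hij | rfl | hij
  · exact hlt i j hij
  · simp [hdiag, CharTwo.add_self_eq_zero]
  · rw [hsymm, hlt j i hij, cutVector_apply, add_comm]

lemma edgeWeight_cutVector (a : Fin m → ZMod 2) :
    edgeWeight (cutVector a) = #{i | a i = 1} * (m - #{i | a i = 1}) := by
  rw [show m - #{i | a i = 1} = #({i | a i = 1} : Finset (Fin m))ᶜ by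
    rw [card_compl, Fintype.card_fin], ← card_product, edgeWeight]
  refine card_nbij' (fun p => if a p.1 = 1 then p else p.swap)
    (fun q => if q.1 < q.2 then q else q.swap) ?_ ?_ ?_ ?_ <;>
  · rintro ⟨i, j⟩ h
    simp only [compl_filter, coe_product, coe_filter, mem_univ, true_and, Set.mem_prod,
      Set.mem_ofPred_eq, Prod.swap_prod_mk, cutVector_apply] at h ⊢
    have := ZMod.eq_zero_or_eq_one (a i)
    have := ZMod.eq_zero_or_eq_one (a j)
    grind

lemma Nat.sub_one_le_mul_sub {k m : ℕ} (hk : 1 ≤ k) (hkm : k < m) : m - 1 ≤ k * (m - k) := by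
  obtain ⟨l, rfl⟩ := Nat.exists_eq_add_of_lt hkm
  rw [show k + l + 1 - k = l + 1 by omega, mul_add_one]
  have := Nat.le_mul_of_pos_left l hk
  omega

/-- The minimum Hamming weight of a nonzero codeword of the cycle code `C_m`
equals `m - 1`. -/
theorem cycleCode_minWeight (m : ℕ) (hm : 3 ≤ m) :
    IsLeast {w | ∃ x ∈ cycleCode m, x ≠ 0 ∧ edgeWeight x = w} (m - 1) := by
  let i₀ : Fin m := ⟨0, by omega⟩
  have hi₀ : IsBot i₀ := fun i => Nat.zero_le i
  constructor
  · refine ⟨cutVector (Pi.single i₀ 1), cutVector_mem_cycleCode _, fun h => ?_, ?_⟩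
    · have := congr_fun₂ h i₀ ⟨1, by omega⟩
      simp [Fin.ext_iff, i₀] at this
    · rw [edgeWeight_cutVector]
      simp [Pi.single_apply, filter_eq']
  · rintro _ ⟨x, hx, hx0, rfl⟩
    obtain ⟨a, ha₀, rfl⟩ := exists_cutVector_of_mem_cycleCode hx hi₀
    rw [edgeWeight_cutVector]
    refine Nat.sub_one_le_mul_sub (card_pos.mpr ?_) ?_
    · obtain ⟨i, hi⟩ := Function.ne_iff.mp (show a ≠ 0 by rintro rfl; exact hx0 cutVector_zero)
      exact ⟨i, by simpa using (ZMod.eq_zero_or_eq_one (a i)).resolve_left hi⟩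
    · simpa using card_lt_univ_of_notMem (s := {i | a i = 1}) (x := i₀) (by simp [ha₀])
end

section
/- For the cycle code C_m under IID bit-flip noise with rate p < 1/2 and bias ε defined by 2p(1−p) = 1/2 − ε, the edge-by-edge majority-vote decoder recovers the full error vector except with probability at most 2m²·exp(−2ε²m). -/
open MeasureTheory ProbabilityTheory

/-- The edges of the complete graph `K_m`: ordered pairs `(i, j)` with `i < j`. -/
abbrev KEdge (m : ℕ) := {q : Fin m × Fin m // q.1 < q.2}

/-- The bit of an edge-configuration on the unordered pair `{i, j}`. -/
def pairBit {m : ℕ} (c : KEdge m → ZMod 2) (i j : Fin m) : ZMod 2 :=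
  if h : i < j then c ⟨(i, j), h⟩ else if h' : j < i then c ⟨(j, i), h'⟩ else 0

/-- The majority-vote decoder of the cycle code for the edge `(i, j)`: it computes the
`m - 2` triangle syndromes through `(i, j)` and outputs `1` exactly when more than `m/2`
of them are `1`. -/
noncomputable def cycleMajority {m : ℕ} (c : KEdge m → ZMod 2) (i j : Fin m) : ZMod 2 :=
  if ((Finset.univ.filter fun l : Fin m =>
        l ≠ i ∧ l ≠ j ∧ pairBit c i j + pairBit c i l + pairBit c j l = 1).card : ℝ) ≤
      (m : ℝ) / 2
  then 0 else 1

/-!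
Fix an edge `{i, j}` with bit `x`. For `l ∉ {i, j}` the syndrome through `l` is `x + y_l`, where
`y_l` is the parity of the path `i - l - j`. These paths use pairwise disjoint pairs of edges, so
the `y_l` are independent Bernoulli(`2p(1-p) = 1/2 - ε`) variables, independent of `x`. Whatever
`x` is, a decoding error forces `W = #{l | y_l = 1} + 2x ≥ m/2`, and the Chernoff bound with
`exp t = (1 + 2ε)/(1 - 2ε)` gives `P(W ≥ m/2) ≤ (1 - 4ε²)^((m-2)/2) ≤ exp(-2ε²(m-2))`.
A union bound over the `C(m, 2) ≤ m²/2` edges and `exp(4ε²) ≤ 4` finish the proof.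
-/

theorem DependsOn.finsetSum {ι κ M : Type*} {α : ι → Type*} [AddCommMonoid M] {s : Finset κ}
    {S : κ → Set ι} {g : κ → (Π i, α i) → M} (hg : ∀ k ∈ s, DependsOn (g k) (S k)) :
    DependsOn (fun x ↦ ∑ k ∈ s, g k x) (⋃ k ∈ s, S k) := fun _ _ hxy ↦
  Finset.sum_congr rfl fun k hk ↦ hg k hk fun i hi ↦ hxy i (Set.mem_biUnion hk hi)

namespace ProbabilityTheory

section DependsOn

variable {Ω ι β γ : Type*} {mΩ : MeasurableSpace Ω} {μ : Measure Ω}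
  [MeasurableSpace β] [Countable β] [MeasurableSingletonClass β]
  [MeasurableSpace γ] [Nonempty γ] {f : ι → Ω → β}

theorem measurable_comp_of_dependsOn (hf : ∀ i, Measurable (f i)) {S : Finset ι}
    {φ : (ι → β) → γ} (hφ : DependsOn φ S) : Measurable fun ω ↦ φ (f · ω) := by
  obtain ⟨φ', rfl⟩ := dependsOn_iff_exists_comp.1 hφ
  exact (measurable_of_countable φ').comp (measurable_pi_lambda _ fun i ↦ hf i)

theorem iIndepFun.indepFun_comp_of_dependsOn (hindep : iIndepFun f μ)
    (hf : ∀ i, Measurable (f i)) {S T : Finset ι} (hST : Disjoint S T) {φ ψ : (ι → β) → γ}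
    (hφ : DependsOn φ S) (hψ : DependsOn ψ T) :
    IndepFun (fun ω ↦ φ (f · ω)) (fun ω ↦ ψ (f · ω)) μ := by
  obtain ⟨φ', rfl⟩ := dependsOn_iff_exists_comp.1 hφ
  obtain ⟨ψ', rfl⟩ := dependsOn_iff_exists_comp.1 hψ
  exact (hindep.indepFun_finset S T hST hf).comp (measurable_of_countable φ')
    (measurable_of_countable ψ')

theorem iIndepFun.mgf_sum_comp_of_dependsOn {κ : Type*} (hindep : iIndepFun f μ)
    (hf : ∀ i, Measurable (f i)) {s : Finset κ} {S : κ → Finset ι}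
    (hS : (s : Set κ).PairwiseDisjoint S) {g : κ → (ι → β) → ℝ}
    (hg : ∀ k ∈ s, DependsOn (g k) (S k)) (t : ℝ) :
    mgf (fun ω ↦ ∑ k ∈ s, g k (f · ω)) μ t = ∏ k ∈ s, mgf (fun ω ↦ g k (f · ω)) μ t := by
  classical
  induction s using Finset.induction_on with
  | empty => simp [hindep.isProbabilityMeasure]
  | insert k s hk ih =>
    rw [Finset.coe_insert, Set.pairwiseDisjoint_insert] at hS
    have hgk := hg k (s.mem_insert_self k)
    have hrest : DependsOn (fun x ↦ ∑ l ∈ s, g l x) ↑(s.biUnion S) := by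
      rw [Finset.coe_biUnion]
      exact DependsOn.finsetSum fun l hl ↦ hg l (Finset.mem_insert_of_mem hl)
    have hdisj : Disjoint (S k) (s.biUnion S) :=
      (Finset.disjoint_biUnion_right _ _ _).2 fun l hl ↦
        hS.2 l hl (ne_of_mem_of_not_mem hl hk).symm
    simp_rw [Finset.sum_insert hk, Finset.prod_insert hk]
    rw [← ih hS.1 fun l hl ↦ hg l (Finset.mem_insert_of_mem hl)]
    exact (hindep.indepFun_comp_of_dependsOn hf hdisj hgk hrest).mgf_add'
      (measurable_comp_of_dependsOn hf hgk).aestronglyMeasurable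
      (measurable_comp_of_dependsOn hf hrest).aestronglyMeasurable

end DependsOn

variable {Ω : Type*} {mΩ : MeasurableSpace Ω} {μ : Measure Ω} [IsProbabilityMeasure μ]

theorem mgf_indicator_const {s : Set Ω} (hs : MeasurableSet s) (c t : ℝ) :
    mgf (s.indicator fun _ ↦ c) μ t = μ.real s * Real.exp (t * c) + (1 - μ.real s) := by
  have h : (fun ω ↦ Real.exp (t * s.indicator (fun _ ↦ c) ω)) =
      fun ω ↦ s.indicator (fun _ ↦ Real.exp (t * c) - 1) ω + 1 := by
    ext ω
    by_cases hω : ω ∈ s <;> simp [hω]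
  rw [mgf, h, integral_add ((integrable_const _).indicator hs) (integrable_const _),
    integral_indicator_const _ hs]
  simp only [smul_eq_mul, integral_const, probReal_univ, mul_one]
  ring

theorem IndepFun.measureReal_add_eq_one {X Y : Ω → ZMod 2} (hXY : IndepFun X Y μ)
    (hX : Measurable X) (hY : Measurable Y) :
    μ.real {ω | X ω + Y ω = 1} =
      μ.real {ω | X ω = 1} * (1 - μ.real {ω | Y ω = 1}) +
        (1 - μ.real {ω | X ω = 1}) * μ.real {ω | Y ω = 1} := by
  have hA := hX (measurableSet_singleton 1)
  have hB := hY (measurableSet_singleton 1)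
  have hsplit : {ω | X ω + Y ω = 1} =
      X ⁻¹' {1} ∩ Y ⁻¹' {1}ᶜ ∪ X ⁻¹' {1}ᶜ ∩ Y ⁻¹' {1} := by
    ext ω
    simp only [Set.mem_ofPred_eq, Set.mem_union, Set.mem_inter_iff, Set.mem_preimage,
      Set.mem_compl_iff, Set.mem_singleton_iff]
    generalize X ω = x; generalize Y ω = y; revert x y; decide
  have hdisj : Disjoint (X ⁻¹' {1} ∩ Y ⁻¹' {1}ᶜ) (X ⁻¹' {1}ᶜ ∩ Y ⁻¹' {1}) :=
    disjoint_compl_right.mono Set.inter_subset_left Set.inter_subset_left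
  have hmul (A B : Set (ZMod 2)) (hA : MeasurableSet A) (hB : MeasurableSet B) :
      μ.real (X ⁻¹' A ∩ Y ⁻¹' B) = μ.real (X ⁻¹' A) * μ.real (Y ⁻¹' B) := by
    simp only [measureReal_def, hXY.measure_inter_preimage_eq_mul A B hA hB, ENNReal.toReal_mul]
  rw [hsplit, measureReal_union hdisj (hA.compl.inter hB),
    hmul _ _ (measurableSet_singleton 1) (measurableSet_singleton 1).compl,
    hmul _ _ (measurableSet_singleton 1).compl (measurableSet_singleton 1), Set.preimage_compl,
    Set.preimage_compl, probReal_compl_eq_one_sub hA, probReal_compl_eq_one_sub hB]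
  rfl

end ProbabilityTheory

section

open Real

theorem chernoff_exponent_le {p ε : ℝ} (hε0 : 0 < ε) (hε1 : ε < 1 / 2)
    (hpε : 2 * p ≤ 1 - 2 * ε) (n : ℕ) :
    exp (-log ((1 + 2 * ε) / (1 - 2 * ε)) * ((n + 2) / 2)) *
        ((1 + 2 * ε) ^ n * (p * ((1 + 2 * ε) / (1 - 2 * ε)) ^ 2 + (1 - p))) ≤
      exp (-2 * ε ^ 2 * n) := by
  set u := 1 + 2 * ε
  set v := 1 - 2 * ε
  have hu : 0 < u := by positivity
  have hv : 0 < v := by linarith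
  have hr : 1 ≤ u / v := by rw [le_div_iff₀ hv]; linarith
  -- `u/v - (p (u/v)² + 1 - p) = (u/v - 1)(1 - p (u/v + 1))`
  have hp : p * (u / v) ^ 2 + (1 - p) ≤ u / v := by
    have hpr : p * (u / v + 1) ≤ 1 := by
      rw [div_add_one hv.ne', mul_div_assoc', div_le_one hv]; linarith
    nlinarith
  -- the left side is at most `(w u)^n`, and `(w u)^2 = u v = 1 - 4ε²`
  set w := exp (-log (u / v) / 2)
  have hw2 : w ^ 2 = v / u := by
    rw [← exp_nat_mul, Nat.cast_ofNat, mul_div_cancel₀ _ two_ne_zero, exp_neg,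
      exp_log (div_pos hu hv), inv_div]
  have hwu : w * u ≤ exp (-2 * ε ^ 2) := by
    refine (pow_le_pow_iff_left₀ (by positivity) (exp_pos _).le two_ne_zero).1 ?_
    calc (w * u) ^ 2 = 1 + -(4 * ε ^ 2) := by rw [mul_pow, hw2]; field_simp; ring
      _ ≤ exp (-(4 * ε ^ 2)) := by linarith [add_one_le_exp (-(4 * ε ^ 2))]
      _ = exp (-2 * ε ^ 2) ^ 2 := by rw [← exp_nat_mul]; ring_nf
  calc exp (-log (u / v) * ((n + 2) / 2)) * (u ^ n * (p * (u / v) ^ 2 + (1 - p)))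
      = w ^ (n + 2) * (u ^ n * (p * (u / v) ^ 2 + (1 - p))) := by
        rw [← exp_nat_mul]
        push_cast
        ring_nf
    _ ≤ w ^ (n + 2) * (u ^ n * (u / v)) := by gcongr
    _ = (w * u) ^ n := by rw [pow_add, hw2, mul_pow]; field_simp
    _ ≤ exp (-2 * ε ^ 2) ^ n := by gcongr
    _ = exp (-2 * ε ^ 2 * n) := by rw [← exp_nat_mul]; ring_nf

theorem choose_two_mul_exp_le {ε : ℝ} (hε : ε ^ 2 ≤ 1 / 4) (m : ℕ) :
    (m.choose 2 : ℝ) * exp (-2 * ε ^ 2 * (m - 2)) ≤ 2 * m ^ 2 * exp (-2 * ε ^ 2 * m) := by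
  have hchoose : (m.choose 2 : ℝ) ≤ m ^ 2 / 2 := by
    simpa using Nat.choose_le_pow_div (α := ℝ) 2 m
  have hexp : exp (4 * ε ^ 2) ≤ 4 :=
    calc exp (4 * ε ^ 2) ≤ exp 1 := exp_le_exp.2 (by linarith)
      _ ≤ 4 := by linarith [exp_one_lt_d9]
  calc (m.choose 2 : ℝ) * exp (-2 * ε ^ 2 * (m - 2))
      = m.choose 2 * (exp (4 * ε ^ 2) * exp (-2 * ε ^ 2 * m)) := by rw [← exp_add]; ring_nf
    _ ≤ m ^ 2 / 2 * (4 * exp (-2 * ε ^ 2 * m)) := by gcongr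
    _ = 2 * m ^ 2 * exp (-2 * ε ^ 2 * m) := by ring

theorem bias_mem_Ioo {p ε : ℝ} (hp0 : 0 < p) (hp : p < 1 / 2)
    (hε : 2 * p * (1 - p) = 1 / 2 - ε) : ε ∈ Set.Ioo 0 (1 / 2) :=
  ⟨by nlinarith, by nlinarith⟩

end

section CycleCode

open Finset

variable {m : ℕ}

theorem pairBit_comm (c : KEdge m → ZMod 2) (a b : Fin m) : pairBit c a b = pairBit c b a := by
  unfold pairBit
  split_ifs <;> first | rfl | order

theorem pairBit_of_lt (c : KEdge m → ZMod 2) {a b : Fin m} (h : a < b) :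
    pairBit c a b = c ⟨(a, b), h⟩ :=
  dif_pos h

def incidentEdges (a b : Fin m) : Finset (KEdge m) := {e | e.1 = (a, b) ∨ e.1 = (b, a)}

theorem dependsOn_pairBit (a b : Fin m) :
    DependsOn (fun c : KEdge m → ZMod 2 ↦ pairBit c a b) (incidentEdges a b) := by
  intro x y h
  simp only [pairBit]
  split_ifs
  · exact h _ (by simp [incidentEdges])
  · exact h _ (by simp [incidentEdges])
  · rfl

theorem disjoint_incidentEdges {a b a' b' : Fin m}
    (h : ¬(a = a' ∧ b = b' ∨ a = b' ∧ b = a')) :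
    Disjoint (incidentEdges a b) (incidentEdges a' b') := by
  simp only [disjoint_left, incidentEdges, mem_filter, mem_univ, true_and]
  grind

def pathEdges (i j l : Fin m) : Finset (KEdge m) := incidentEdges i l ∪ incidentEdges j l

theorem pairwiseDisjoint_pathEdges {i j : Fin m} (hij : i ≠ j) :
    (({i, j}ᶜ : Finset (Fin m)) : Set (Fin m)).PairwiseDisjoint (pathEdges i j) := by
  intro l hl l' hl' hll'
  simp only [coe_compl, coe_insert, coe_singleton, Set.mem_compl_iff, Set.mem_insert_iff,
    Set.mem_singleton_iff, not_or] at hl hl'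
  simp only [pathEdges, Function.onFun, disjoint_union_left, disjoint_union_right]
  refine ⟨⟨?_, ?_⟩, ?_, ?_⟩ <;> exact disjoint_incidentEdges (by tauto)

theorem disjoint_biUnion_pathEdges {i j : Fin m} (hij : i ≠ j) :
    Disjoint (({i, j}ᶜ : Finset (Fin m)).biUnion (pathEdges i j)) (incidentEdges i j) := by
  refine (disjoint_biUnion_left _ _ _).2 fun l hl ↦ ?_
  simp only [mem_compl, mem_insert, mem_singleton, not_or] at hl
  exact disjoint_union_left.2 ⟨disjoint_incidentEdges (by tauto),
    disjoint_incidentEdges (by tauto)⟩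

noncomputable def pathVote (i j l : Fin m) (c : KEdge m → ZMod 2) : ℝ :=
  if pairBit c i l + pairBit c j l = 1 then 1 else 0

theorem dependsOn_pathVote (i j l : Fin m) : DependsOn (pathVote i j l) (pathEdges i j l) :=
  fun _ _ h ↦ by
    simp only [pathVote, dependsOn_pairBit i l fun e he ↦ h e (mem_union_left _ he),
      dependsOn_pairBit j l fun e he ↦ h e (mem_union_right _ he)]

/-- When the bit of `{i, j}` is `1` the decoder errs iff at most `m / 2` of the `m - 2`
syndromes are `1`, i.e. iff at least `m / 2 - 2` paths `i - l - j` are odd; the weight `2` on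
that bit makes both cases read `m / 2 ≤ decoderScore c i j`. -/
noncomputable def decoderScore (c : KEdge m → ZMod 2) (i j : Fin m) : ℝ :=
  (∑ l ∈ ({i, j}ᶜ : Finset (Fin m)), pathVote i j l c) + if pairBit c i j = 1 then 2 else 0

theorem cycleMajority_eq (c : KEdge m → ZMod 2) (i j : Fin m) :
    cycleMajority c i j =
      if (#(({i, j}ᶜ : Finset (Fin m)).filter fun l ↦
          pairBit c i j + (pairBit c i l + pairBit c j l) = 1) : ℝ) ≤ (m : ℝ) / 2
      then 0 else 1 := by
  unfold cycleMajority
  congr 4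
  ext l
  simp [add_assoc, and_assoc]

theorem card_compl_pair {i j : Fin m} (hij : i ≠ j) :
    (#({i, j}ᶜ : Finset (Fin m)) : ℝ) = m - 2 := by
  have h := card_compl_add_card ({i, j} : Finset (Fin m))
  rw [card_pair hij, Fintype.card_fin] at h
  have h' : ((#({i, j}ᶜ : Finset (Fin m)) : ℕ) : ℝ) + 2 = m := by exact_mod_cast h
  linarith

theorem le_decoderScore_of_cycleMajority_ne {c : KEdge m → ZMod 2} {i j : Fin m} (hij : i ≠ j)
    (h : cycleMajority c i j ≠ pairBit c i j) : (m : ℝ) / 2 ≤ decoderScore c i j := by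
  set T : Finset (Fin m) := {i, j}ᶜ
  simp only [decoderScore, pathVote]
  rw [sum_boole]
  rw [cycleMajority_eq] at h
  rcases (by decide : ∀ x : ZMod 2, x = 0 ∨ x = 1) (pairBit c i j) with h0 | h1
  · simp only [h0, zero_add] at h
    rw [h0, if_neg zero_ne_one, add_zero]
    exact (not_le.1 fun hle ↦ h (if_pos hle)).le
  · have heven : (T.filter fun l ↦ 1 + (pairBit c i l + pairBit c j l) = 1) =
        T.filter fun l ↦ ¬pairBit c i l + pairBit c j l = 1 :=
      filter_congr fun l _ ↦ by
        generalize pairBit c i l + pairBit c j l = x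
        revert x; decide
    rw [h1, heven] at h
    have hle := by_contra fun hgt ↦ h (if_neg hgt)
    have hsplit : ((#(T.filter fun l ↦ pairBit c i l + pairBit c j l = 1) : ℕ) : ℝ) +
        #(T.filter fun l ↦ ¬pairBit c i l + pairBit c j l = 1) = m - 2 := by
      rw [← card_compl_pair hij]
      exact_mod_cast card_filter_add_card_filter_not _
    rw [h1, if_pos rfl]
    linarith

theorem cycleMajority_zero (i j : Fin m) : cycleMajority (fun _ ↦ 0) i j = 0 := by
  refine if_pos ?_
  simp only [pairBit, dite_eq_ite, ite_self, add_zero, zero_ne_one, and_false, filter_false,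
    card_empty, CharP.cast_eq_zero]
  positivity

theorem card_kEdge (m : ℕ) : Fintype.card (KEdge m) = m.choose 2 := by
  rw [Fintype.card_subtype, Fintype.card_product_filter_lt, Fintype.card_fin]

variable {Ω : Type*} {mΩ : MeasurableSpace Ω} {μ : Measure Ω} {f : KEdge m → Ω → ZMod 2} {p : ℝ}

theorem measureReal_pairBit_eq_one (hflip : ∀ e, μ.real {ω | f e ω = 1} = p) {a b : Fin m}
    (hab : a ≠ b) : μ.real {ω | pairBit (f · ω) a b = 1} = p := by
  wlog h : a < b generalizing a b
  · simpa only [pairBit_comm] using this hab.symm (hab.lt_or_gt.resolve_left h)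
  simp only [pairBit_of_lt _ h, hflip]

theorem measurable_pairBit (hmeas : ∀ e, Measurable (f e)) (a b : Fin m) :
    Measurable fun ω ↦ pairBit (f · ω) a b :=
  measurable_comp_of_dependsOn hmeas (dependsOn_pairBit a b)

theorem measure_exists_cycleMajority_ne_eq_zero (hflip : ∀ e, μ {ω | f e ω = 1} = 0) :
    μ {ω | ∃ e : KEdge m, cycleMajority (f · ω) e.1.1 e.1.2 ≠ f e ω} = 0 := by
  refine measure_mono_null (fun ω ⟨e, he⟩ ↦ ?_) (measure_iUnion_null hflip)
  by_contra hno
  simp only [Set.mem_iUnion, Set.mem_ofPred_eq, not_exists] at hno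
  have hzero : (f · ω) = fun _ ↦ 0 :=
    funext fun e' ↦ (by decide : ∀ x : ZMod 2, x ≠ 1 → x = 0) _ (hno e')
  rw [hzero, cycleMajority_zero, congrFun hzero e] at he
  exact he rfl

variable [IsProbabilityMeasure μ]

theorem mgf_pathVote (hindep : iIndepFun f μ) (hmeas : ∀ e, Measurable (f e))
    (hflip : ∀ e, μ.real {ω | f e ω = 1} = p) {i j l : Fin m} (hij : i ≠ j) (hli : l ≠ i)
    (hlj : l ≠ j) (t : ℝ) :
    mgf (fun ω ↦ pathVote i j l (f · ω)) μ t =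
      2 * p * (1 - p) * Real.exp t + (1 - 2 * p * (1 - p)) := by
  have hindep' : IndepFun (fun ω ↦ pairBit (f · ω) i l) (fun ω ↦ pairBit (f · ω) j l) μ :=
    hindep.indepFun_comp_of_dependsOn hmeas (disjoint_incidentEdges (by tauto))
      (dependsOn_pairBit i l) (dependsOn_pairBit j l)
  have hA : MeasurableSet {ω | pairBit (f · ω) i l + pairBit (f · ω) j l = 1} :=
    ((measurable_pairBit hmeas i l).add (measurable_pairBit hmeas j l)) (measurableSet_singleton 1)
  have hind : (fun ω ↦ pathVote i j l (f · ω)) =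
      {ω | pairBit (f · ω) i l + pairBit (f · ω) j l = 1}.indicator fun _ ↦ 1 := by
    ext ω
    simp only [pathVote, Set.indicator_apply, Set.mem_ofPred_eq]
  rw [hind, mgf_indicator_const hA,
    hindep'.measureReal_add_eq_one (measurable_pairBit hmeas i l) (measurable_pairBit hmeas j l),
    measureReal_pairBit_eq_one hflip hli.symm, measureReal_pairBit_eq_one hflip hlj.symm, mul_one]
  ring

theorem mgf_ite_pairBit (hmeas : ∀ e, Measurable (f e))
    (hflip : ∀ e, μ.real {ω | f e ω = 1} = p) {i j : Fin m} (hij : i ≠ j) (t : ℝ) :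
    mgf (fun ω ↦ if pairBit (f · ω) i j = 1 then (2 : ℝ) else 0) μ t =
      p * Real.exp (2 * t) + (1 - p) := by
  have hA : MeasurableSet {ω | pairBit (f · ω) i j = 1} :=
    measurable_pairBit hmeas i j (measurableSet_singleton 1)
  have hind : (fun ω ↦ if pairBit (f · ω) i j = 1 then (2 : ℝ) else 0) =
      {ω | pairBit (f · ω) i j = 1}.indicator fun _ ↦ 2 := by
    ext ω
    simp only [Set.indicator_apply, Set.mem_ofPred_eq]
  rw [hind, mgf_indicator_const hA, measureReal_pairBit_eq_one hflip hij, mul_comm t]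

theorem mgf_decoderScore (hindep : iIndepFun f μ) (hmeas : ∀ e, Measurable (f e))
    (hflip : ∀ e, μ.real {ω | f e ω = 1} = p) {i j : Fin m} (hij : i ≠ j) (t : ℝ) :
    mgf (fun ω ↦ decoderScore (f · ω) i j) μ t =
      (2 * p * (1 - p) * Real.exp t + (1 - 2 * p * (1 - p))) ^ #({i, j}ᶜ : Finset (Fin m)) *
        (p * Real.exp (2 * t) + (1 - p)) := by
  set T : Finset (Fin m) := {i, j}ᶜ
  have hvotes : DependsOn (fun c ↦ ∑ l ∈ T, pathVote i j l c) ↑(T.biUnion (pathEdges i j)) := by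
    rw [coe_biUnion]
    exact DependsOn.finsetSum fun l _ ↦ dependsOn_pathVote i j l
  have hdirect : DependsOn (fun c ↦ if pairBit c i j = 1 then (2 : ℝ) else 0)
      (incidentEdges i j) := fun _ _ h ↦ by simp only [dependsOn_pairBit i j h]
  calc mgf (fun ω ↦ decoderScore (f · ω) i j) μ t
      = mgf (fun ω ↦ ∑ l ∈ T, pathVote i j l (f · ω)) μ t *
          mgf (fun ω ↦ if pairBit (f · ω) i j = 1 then (2 : ℝ) else 0) μ t :=
        (hindep.indepFun_comp_of_dependsOn hmeas (disjoint_biUnion_pathEdges hij) hvotes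
          hdirect).mgf_add' (measurable_comp_of_dependsOn hmeas hvotes).aestronglyMeasurable
          (measurable_comp_of_dependsOn hmeas hdirect).aestronglyMeasurable
    _ = _ := by
      rw [hindep.mgf_sum_comp_of_dependsOn hmeas (pairwiseDisjoint_pathEdges hij)
          fun l _ ↦ dependsOn_pathVote i j l,
        prod_congr rfl fun l hl ↦ mgf_pathVote hindep hmeas hflip hij
          (by simp_all [T]) (by simp_all [T]) t,
        prod_const, mgf_ite_pairBit hmeas hflip hij]

theorem measure_cycleMajority_ne_le (hindep : iIndepFun f μ) (hmeas : ∀ e, Measurable (f e))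
    (hflip : ∀ e, μ.real {ω | f e ω = 1} = p) {ε : ℝ} (hp0 : 0 < p) (hp : p < 1 / 2)
    (hε : 2 * p * (1 - p) = 1 / 2 - ε) (e : KEdge m) :
    μ {ω | cycleMajority (f · ω) e.1.1 e.1.2 ≠ f e ω} ≤
      ENNReal.ofReal (Real.exp (-2 * ε ^ 2 * (m - 2))) := by
  obtain ⟨hε0, hε1⟩ := bias_mem_Ioo hp0 hp hε
  set n := #({e.1.1, e.1.2}ᶜ : Finset (Fin m))
  have hm : (m : ℝ) = n + 2 := by rw [card_compl_pair e.2.ne]; ring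
  have hv : 0 < 1 - 2 * ε := by linarith
  set r := (1 + 2 * ε) / (1 - 2 * ε)
  -- the Chernoff parameter at which each path factor of the mgf is exactly `1 + 2ε`
  set t := Real.log r
  have hexp : Real.exp t = r := Real.exp_log (div_pos (by linarith) hv)
  have hpath : 2 * p * (1 - p) * r + (1 - 2 * p * (1 - p)) = 1 + 2 * ε := by
    rw [hε]; simp only [r]; field_simp; ring
  have hsub : {ω | cycleMajority (f · ω) e.1.1 e.1.2 ≠ f e ω} ⊆
      {ω | (m : ℝ) / 2 ≤ decoderScore (f · ω) e.1.1 e.1.2} := fun ω hω ↦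
    le_decoderScore_of_cycleMajority_ne e.2.ne (by rwa [pairBit_of_lt _ e.2])
  have hint : Integrable (fun ω ↦ Real.exp (t * decoderScore (f · ω) e.1.1 e.1.2)) μ :=
    (Integrable.of_finite (f := fun c ↦ Real.exp (t * decoderScore c e.1.1 e.1.2))).comp_measurable
      (measurable_pi_lambda _ hmeas)
  refine (measure_mono hsub).trans ?_
  rw [← ofReal_measureReal]
  refine ENNReal.ofReal_le_ofReal ?_
  calc μ.real {ω | (m : ℝ) / 2 ≤ decoderScore (f · ω) e.1.1 e.1.2}
      ≤ Real.exp (-t * (m / 2)) * mgf (fun ω ↦ decoderScore (f · ω) e.1.1 e.1.2) μ t :=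
        measure_ge_le_exp_mul_mgf _ (Real.log_nonneg (by rw [le_div_iff₀ hv]; linarith)) hint
    _ = Real.exp (-t * ((n + 2) / 2)) * ((1 + 2 * ε) ^ n * (p * r ^ 2 + (1 - p))) := by
      rw [mgf_decoderScore hindep hmeas hflip e.2.ne, show 2 * t = t + t by ring, Real.exp_add,
        hexp, hpath, hm, sq]
    _ ≤ Real.exp (-2 * ε ^ 2 * n) := chernoff_exponent_le hε0 hε1 (by nlinarith) n
    _ = Real.exp (-2 * ε ^ 2 * (m - 2)) := by rw [hm, add_sub_cancel_right]

end CycleCode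

theorem cycle_code_decoder_bound_general (p ε : ℝ) (hp : p < 1 / 2)
    (hε : 2 * p * (1 - p) = 1 / 2 - ε) (m : ℕ)
    {Ω : Type*} [MeasureSpace Ω] [IsProbabilityMeasure (ℙ : Measure Ω)]
    (f : KEdge m → Ω → ZMod 2) (hmeas : ∀ e, Measurable (f e))
    (hindep : iIndepFun f ℙ)
    (hflip : ∀ e, ℙ {ω | f e ω = 1} = ENNReal.ofReal p) :
    ℙ {ω | ∃ e : KEdge m,
        cycleMajority (fun e' => f e' ω) e.1.1 e.1.2 ≠ f e ω} ≤
      ENNReal.ofReal (2 * m ^ 2 * Real.exp (-2 * ε ^ 2 * m)) := by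
  rcases le_or_gt p 0 with hp0 | hp0
  · rw [measure_exists_cycleMajority_ne_eq_zero fun e ↦
      (hflip e).trans (ENNReal.ofReal_eq_zero.2 hp0)]
    exact zero_le
  have hflip' (e : KEdge m) : (ℙ : Measure Ω).real {ω | f e ω = 1} = p := by
    rw [measureReal_def, hflip, ENNReal.toReal_ofReal hp0.le]
  have hε2 : ε ^ 2 ≤ 1 / 4 := by
    obtain ⟨hε0, hε1⟩ := bias_mem_Ioo hp0 hp hε
    nlinarith
  calc ℙ {ω | ∃ e : KEdge m, cycleMajority (fun e' => f e' ω) e.1.1 e.1.2 ≠ f e ω}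
      ≤ ∑ e : KEdge m, ℙ {ω | cycleMajority (f · ω) e.1.1 e.1.2 ≠ f e ω} := by
        rw [Set.ofPred_exists]; exact measure_iUnion_fintype_le _ _
    _ ≤ ∑ _ : KEdge m, ENNReal.ofReal (Real.exp (-2 * ε ^ 2 * (m - 2))) :=
        Finset.sum_le_sum fun e _ ↦ measure_cycleMajority_ne_le hindep hmeas hflip' hp0 hp hε e
    _ = ENNReal.ofReal (m.choose 2 * Real.exp (-2 * ε ^ 2 * (m - 2))) := by
        rw [Finset.sum_const, Finset.card_univ, card_kEdge, nsmul_eq_mul,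
          ENNReal.ofReal_mul (by positivity), ENNReal.ofReal_natCast]
    _ ≤ ENNReal.ofReal (2 * m ^ 2 * Real.exp (-2 * ε ^ 2 * m)) :=
        ENNReal.ofReal_le_ofReal (choose_two_mul_exp_le hε2 m)

/-- For the cycle code `C_m` under IID bit-flip noise of rate `p < 1/2` with bias `ε`
defined by `2p(1-p) = 1/2 - ε`, the edge-by-edge majority-vote decoder recovers the full
error vector except with probability at most `2m²·exp(-2ε²m)`. -/
theorem cycle_code_decoder_bound (p ε : ℝ) (hp0 : 0 ≤ p) (hp : p < 1 / 2)
    (hε : 2 * p * (1 - p) = 1 / 2 - ε) (m : ℕ) (hm : 3 ≤ m)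
    {Ω : Type*} [MeasureSpace Ω] [IsProbabilityMeasure (ℙ : Measure Ω)]
    (f : KEdge m → Ω → ZMod 2) (hmeas : ∀ e, Measurable (f e))
    (hindep : iIndepFun f ℙ)
    (hflip : ∀ e, ℙ {ω | f e ω = 1} = ENNReal.ofReal p) :
    ℙ {ω | ∃ e : KEdge m,
        cycleMajority (fun e' => f e' ω) e.1.1 e.1.2 ≠ f e ω} ≤
      ENNReal.ofReal (2 * m ^ 2 * Real.exp (-2 * ε ^ 2 * m)) :=
  cycle_code_decoder_bound_general p ε hp hε m f hmeas hindep hflip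
end

section
/- The F_2-solution space of the Y-code of the standard j×j surface code (the set of Y-error configurations with trivial syndrome) has dimension exactly j, and every codeword is uniquely determined by its restriction to the top row of horizontal edges. -/
/-- Edges (physical qubits) of the standard `j×k` surface code: `j·k` horizontal edges
(indexed by row and column) and `(j-1)·(k-1)` vertical edges. -/
abbrev SurfEdge (j k : ℕ) := (Fin j × Fin k) ⊕ (Fin (j - 1) × Fin (k - 1))

/-- Vertices (`X`-type stabilizer generators) of the standard `j×k` surface code. -/
abbrev SurfVertex (j k : ℕ) := Fin j × Fin (k - 1)

/-- Plaquettes (`Z`-type stabilizer generators) of the standard `j×k` surface code. -/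
abbrev SurfPlaq (j k : ℕ) := Fin (j - 1) × Fin k

/-- Indicator (over `F₂`) of the incidence of an edge with the vertex `v`: the support of
the vertex stabilizer `A_v = ∏_{e ∈ v} X_e`. -/
def vInd {j k : ℕ} (v : SurfVertex j k) (e : SurfEdge j k) : ZMod 2 :=
  match e with
  | .inl (r, c) => if r = v.1 ∧ (c.1 = v.2.1 ∨ c.1 = v.2.1 + 1) then 1 else 0
  | .inr (s, c) => if c = v.2 ∧ (s.1 + 1 = v.1.1 ∨ s.1 = v.1.1) then 1 else 0

/-- Indicator (over `F₂`) of the incidence of an edge with the plaquette `p`: the support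
of the plaquette stabilizer `B_p = ∏_{e ∈ p} Z_e`. -/
def pInd {j k : ℕ} (p : SurfPlaq j k) (e : SurfEdge j k) : ZMod 2 :=
  match e with
  | .inl (r, c) => if c = p.2 ∧ (r.1 = p.1.1 ∨ r.1 = p.1.1 + 1) then 1 else 0
  | .inr (s, c) => if s = p.1 ∧ (c.1 + 1 = p.2.1 ∨ c.1 = p.2.1) then 1 else 0

/-- The syndrome of the `Y`-configuration `y` at vertex `v`: `A_v(y) = ∑_{e ∈ v} y_e`. -/
def Asum {j k : ℕ} (v : SurfVertex j k) (y : SurfEdge j k → ZMod 2) : ZMod 2 :=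
  ∑ e, vInd v e * y e

/-- The syndrome of the `Y`-configuration `y` at plaquette `p`: `B_p(y) = ∑_{e ∈ p} y_e`. -/
def Bsum {j k : ℕ} (p : SurfPlaq j k) (y : SurfEdge j k → ZMod 2) : ZMod 2 :=
  ∑ e, pInd p e * y e

/-- The `Y`-code of the standard `j×k` surface code: the `F₂`-space of `Y`-error
configurations with trivial syndrome, i.e. `A_v(y) = 0` for all vertices and
`B_p(y) = 0` for all plaquettes. -/
def Ycode (j k : ℕ) : Submodule (ZMod 2) (SurfEdge j k → ZMod 2) where
  carrier := {y | (∀ v, Asum v y = 0) ∧ ∀ p, Bsum p y = 0}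
  zero_mem' := ⟨fun v => by simp [Asum], fun p => by simp [Bsum]⟩
  add_mem' := by
    rintro a b ⟨ha1, ha2⟩ ⟨hb1, hb2⟩
    constructor
    · intro v
      simp only [Asum, Pi.add_apply, mul_add, Finset.sum_add_distrib] at *
      rw [ha1 v, hb1 v, add_zero]
    · intro p
      simp only [Bsum, Pi.add_apply, mul_add, Finset.sum_add_distrib] at *
      rw [ha2 p, hb2 p, add_zero]
  smul_mem' := by
    rintro c y ⟨h1, h2⟩
    constructor
    · intro v
      simp only [Asum, Pi.smul_apply, smul_eq_mul, mul_left_comm, ← Finset.mul_sum] at *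
      rw [h1 v, mul_zero]
    · intro p
      simp only [Bsum, Pi.smul_apply, smul_eq_mul, mul_left_comm, ← Finset.mul_sum] at *
      rw [h2 p, mul_zero]

/-- `Y`-configurations corresponding to `Y`-type stabilizers: those that are
simultaneously a sum of vertex-stabilizer supports and a sum of plaquette-stabilizer
supports. -/
def Ystab (j k : ℕ) : Submodule (ZMod 2) (SurfEdge j k → ZMod 2) :=
  Submodule.span (ZMod 2) (Set.range (vInd (j := j) (k := k))) ⊓
    Submodule.span (ZMod 2) (Set.range (pInd (j := j) (k := k)))

/-- The weight of a configuration: the number of qubits on which it is nonzero. -/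
def swt {j k : ℕ} (y : SurfEdge j k → ZMod 2) : ℕ :=
  (Finset.univ.filter fun e => y e = 1).card


/-!
Place the edges on a checkerboard and rotate it by 45°: horizontal edge `(r, c)` gets coordinates
`(u, w) = (c + r, c - r)` and vertical edge `(s, c)` gets `(c + s + 1, c - s)`. Every interior check
then sums a `2 × 2` block, which vanishes on configurations of the form `F w + F (u + 1)`. The
boundary checks, which miss one edge, hold as well when `F` is even and `2j`-periodic: the
missing edge would carry `0`. Taking for `F` the even periodic extension of the partial sums of
`a : Fin j → F₂` gives a codeword whose top row is `a`.

Conversely, in a codeword the vertex checks of row `r` determine the vertical edges of row `r`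
from the horizontal ones, and the plaquette checks then determine row `r + 1`, so the top row
determines everything. Restriction to the top row is thus a linear bijection onto `F₂ʲ`.
-/

open Finset

section Grid

variable {M : Type*} [AddCommMonoid M] {m n : ℕ}

/-- `f` extended by zero from `Fin m × Fin n` to `ℤ × ℤ`. -/
def gridVal (f : Fin m × Fin n → M) (a b : ℤ) : M :=
  ∑ p, if ((p.1 : ℕ) : ℤ) = a ∧ ((p.2 : ℕ) : ℤ) = b then f p else 0

theorem gridVal_coe (f : Fin m × Fin n → M) (a : Fin m) (b : Fin n) :
    gridVal f (a : ℕ) (b : ℕ) = f (a, b) := by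
  have hpt : ∀ p : Fin m × Fin n,
      (((p.1 : ℕ) : ℤ) = (a : ℕ) ∧ ((p.2 : ℕ) : ℤ) = (b : ℕ)) ↔ p = (a, b) := by
    rintro ⟨x, y⟩
    simp [Fin.ext_iff]
  simp only [gridVal, hpt, sum_ite_eq', mem_univ, if_true]

theorem gridVal_eq_zero (f : Fin m × Fin n → M) {a b : ℤ}
    (h : ¬(0 ≤ a ∧ a < m ∧ 0 ≤ b ∧ b < n)) : gridVal f a b = 0 :=
  sum_eq_zero fun p _ => if_neg fun ⟨ha, hb⟩ => h (by omega)

theorem gridVal_restrict (g : ℤ → ℤ → M) {a b : ℤ} (h : 0 ≤ a ∧ a < m ∧ 0 ≤ b ∧ b < n) :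
    gridVal (fun p : Fin m × Fin n => g (p.1 : ℕ) (p.2 : ℕ)) a b = g a b := by
  obtain ⟨ha, ham, hb, hbn⟩ := h
  lift a to ℕ using ha
  lift b to ℕ using hb
  exact gridVal_coe (fun p : Fin m × Fin n => g (p.1 : ℕ) (p.2 : ℕ)) ⟨a, by omega⟩ ⟨b, by omega⟩

end Grid

section Syndrome

variable {j k : ℕ}

def hval (y : SurfEdge j k → ZMod 2) : ℤ → ℤ → ZMod 2 := gridVal (y ∘ Sum.inl)

def vval (y : SurfEdge j k → ZMod 2) : ℤ → ℤ → ZMod 2 := gridVal (y ∘ Sum.inr)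

theorem Asum_eq (v : SurfVertex j k) (y : SurfEdge j k → ZMod 2) :
    Asum v y = hval y (v.1 : ℕ) (v.2 : ℕ) + hval y (v.1 : ℕ) ((v.2 : ℕ) + 1)
      + vval y ((v.1 : ℕ) - 1) (v.2 : ℕ) + vval y (v.1 : ℕ) (v.2 : ℕ) := by
  obtain ⟨⟨r, hr⟩, ⟨c, hc⟩⟩ := v
  have hH : ∀ p : Fin j × Fin k, vInd (⟨r, hr⟩, ⟨c, hc⟩) (.inl p) * y (.inl p) =
      (if ((p.1 : ℕ) : ℤ) = r ∧ ((p.2 : ℕ) : ℤ) = c then y (.inl p) else 0) +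
      (if ((p.1 : ℕ) : ℤ) = r ∧ ((p.2 : ℕ) : ℤ) = c + 1 then y (.inl p) else 0) := by
    rintro ⟨⟨r', _⟩, ⟨c', _⟩⟩
    simp only [vInd, Fin.mk.injEq]
    split_ifs <;> first | (exfalso; omega) | simp
  have hV : ∀ q : Fin (j - 1) × Fin (k - 1), vInd (⟨r, hr⟩, ⟨c, hc⟩) (.inr q) * y (.inr q) =
      (if ((q.1 : ℕ) : ℤ) = r - 1 ∧ ((q.2 : ℕ) : ℤ) = c then y (.inr q) else 0) +
      (if ((q.1 : ℕ) : ℤ) = r ∧ ((q.2 : ℕ) : ℤ) = c then y (.inr q) else 0) := by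
    rintro ⟨⟨s', _⟩, ⟨c', _⟩⟩
    simp only [vInd, Fin.mk.injEq]
    split_ifs <;> first | (exfalso; omega) | simp
  simp only [Asum, hval, vval, gridVal, Fintype.sum_sum_type, hH, hV, sum_add_distrib,
    Function.comp_apply]
  abel

theorem Bsum_eq (p : SurfPlaq j k) (y : SurfEdge j k → ZMod 2) :
    Bsum p y = hval y (p.1 : ℕ) (p.2 : ℕ) + hval y ((p.1 : ℕ) + 1) (p.2 : ℕ)
      + vval y (p.1 : ℕ) ((p.2 : ℕ) - 1) + vval y (p.1 : ℕ) (p.2 : ℕ) := by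
  obtain ⟨⟨s, hs⟩, ⟨c, hc⟩⟩ := p
  have hH : ∀ q : Fin j × Fin k, pInd (⟨s, hs⟩, ⟨c, hc⟩) (.inl q) * y (.inl q) =
      (if ((q.1 : ℕ) : ℤ) = s ∧ ((q.2 : ℕ) : ℤ) = c then y (.inl q) else 0) +
      (if ((q.1 : ℕ) : ℤ) = s + 1 ∧ ((q.2 : ℕ) : ℤ) = c then y (.inl q) else 0) := by
    rintro ⟨⟨r', _⟩, ⟨c', _⟩⟩
    simp only [pInd, Fin.mk.injEq]
    split_ifs <;> first | (exfalso; omega) | simp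
  have hV : ∀ q : Fin (j - 1) × Fin (k - 1), pInd (⟨s, hs⟩, ⟨c, hc⟩) (.inr q) * y (.inr q) =
      (if ((q.1 : ℕ) : ℤ) = s ∧ ((q.2 : ℕ) : ℤ) = c - 1 then y (.inr q) else 0) +
      (if ((q.1 : ℕ) : ℤ) = s ∧ ((q.2 : ℕ) : ℤ) = c then y (.inr q) else 0) := by
    rintro ⟨⟨s', _⟩, ⟨c', _⟩⟩
    simp only [pInd, Fin.mk.injEq]
    split_ifs <;> first | (exfalso; omega) | simp
  simp only [Bsum, hval, vval, gridVal, Fintype.sum_sum_type, hH, hV, sum_add_distrib,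
    Function.comp_apply]
  abel

end Syndrome

section TopRow

variable {j k : ℕ} {y : SurfEdge j k → ZMod 2}

theorem vval_row_eq_zero (hA : ∀ v, Asum v y = 0) (r : ℕ) (hH : ∀ c, hval y r c = 0)
    (hV : ∀ c, vval y (r - 1) c = 0) (c : ℤ) : vval y r c = 0 := by
  by_cases hc : 0 ≤ c ∧ c < k - 1 ∧ r < j - 1
  · obtain ⟨hc0, hck, hrj⟩ := hc
    lift c to ℕ using hc0
    have h := hA (⟨r, by omega⟩, ⟨c, by omega⟩)
    rwa [Asum_eq, hH, hH, hV, zero_add, zero_add, zero_add] at h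
  · exact gridVal_eq_zero _ (by omega)

theorem hval_succ_row_eq_zero (hB : ∀ p, Bsum p y = 0) (r : ℕ) (hH : ∀ c, hval y r c = 0)
    (hV : ∀ c, vval y r c = 0) (c : ℤ) : hval y (r + 1) c = 0 := by
  by_cases hc : 0 ≤ c ∧ c < k ∧ r + 1 < j
  · obtain ⟨hc0, hck, hrj⟩ := hc
    lift c to ℕ using hc0
    have h := hB (⟨r, by omega⟩, ⟨c, by omega⟩)
    rwa [Bsum_eq, hH, hV, hV, zero_add, add_zero, add_zero] at h
  · exact gridVal_eq_zero _ (by omega)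

theorem eq_zero_of_mem_Ycode_of_topRow_eq_zero (hj : 0 < j) (hy : y ∈ Ycode j k)
    (htop : ∀ c : Fin k, y (.inl (⟨0, hj⟩, c)) = 0) : y = 0 := by
  obtain ⟨hA, hB⟩ := hy
  have rows : ∀ r : ℕ, (∀ c, hval y r c = 0) ∧ ∀ c, vval y ((r : ℤ) - 1) c = 0 := by
    intro r
    induction r with
    | zero =>
      refine ⟨fun c => ?_, fun c => gridVal_eq_zero _ (by omega)⟩
      by_cases hc : 0 ≤ c ∧ c < k
      · lift c to ℕ using hc.1
        exact (gridVal_coe _ ⟨0, hj⟩ ⟨c, by omega⟩).trans (htop _)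
      · exact gridVal_eq_zero _ (by omega)
    | succ r ih =>
      have hV := vval_row_eq_zero hA r ih.1 ih.2
      exact ⟨by exact_mod_cast hval_succ_row_eq_zero hB r ih.1 hV, by simpa using hV⟩
  funext e
  rcases e with ⟨r, c⟩ | ⟨s, c⟩
  · exact (gridVal_coe _ r c).symm.trans ((rows r).1 c)
  · have h := (rows (s + 1)).2 c
    rw [Nat.cast_succ, add_sub_cancel_right] at h
    exact (gridVal_coe _ s c).symm.trans h

theorem eq_of_mem_Ycode_of_topRow_eq (hj : 0 < j) {z : SurfEdge j k → ZMod 2}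
    (hy : y ∈ Ycode j k) (hz : z ∈ Ycode j k)
    (htop : ∀ c : Fin k, y (.inl (⟨0, hj⟩, c)) = z (.inl (⟨0, hj⟩, c))) : y = z :=
  sub_eq_zero.mp <| eq_zero_of_mem_Ycode_of_topRow_eq_zero hj (sub_mem hy hz)
    fun c => sub_eq_zero.mpr (htop c)

end TopRow

section Profile

/-- The representative of `x` in `[0, j]` modulo `2j` and sign. -/
def reflectMod (j : ℕ) (x : ℤ) : ℤ := min (x % (2 * j)) (-x % (2 * j))

theorem reflectMod_neg (j : ℕ) (x : ℤ) : reflectMod j (-x) = reflectMod j x := by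
  rw [reflectMod, reflectMod, neg_neg, min_comm]

theorem reflectMod_periodic (j : ℕ) : Function.Periodic (reflectMod j) (2 * j) := by
  intro x
  rw [reflectMod, reflectMod, Int.add_emod_right, neg_add, Int.add_neg_emod_self]

theorem reflectMod_of_mem_Icc {j : ℕ} {x : ℤ} (hx0 : 0 ≤ x) (hxj : x ≤ j) :
    reflectMod j x = x := by
  rcases hx0.eq_or_lt with rfl | hx0
  · simp [reflectMod]
  have h1 : x % (2 * j) = x := Int.emod_eq_of_lt hx0.le (by omega)
  have h2 : -x % (2 * j) = 2 * j - x := by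
    rw [show -x = (2 * j - x) + (2 * j) * (-1) by ring, Int.add_mul_emod_self_left]
    exact Int.emod_eq_of_lt (by omega) (by omega)
  rw [reflectMod, h1, h2]
  omega

variable {j : ℕ}

/-- The even, `2j`-periodic extension of the partial sums `x ↦ ∑_{c < x} a c` on `[0, j]`. -/
def profile (a : Fin j → ZMod 2) (x : ℤ) : ZMod 2 :=
  ∑ c : Fin j, if ((c : ℕ) : ℤ) < reflectMod j x then a c else 0

theorem profile_even (a : Fin j → ZMod 2) : Function.Even (profile a) := by
  intro x
  simp only [profile, reflectMod_neg]

theorem profile_periodic (a : Fin j → ZMod 2) : Function.Periodic (profile a) (2 * j) := by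
  intro x
  simp only [profile, reflectMod_periodic j x]

theorem profile_add_profile_succ (a : Fin j → ZMod 2) (c : Fin j) :
    profile a (c : ℕ) + profile a ((c : ℕ) + 1) = a c := by
  have hc := c.2
  have hpt : ∀ c' : Fin j, ((if ((c' : ℕ) : ℤ) < (c : ℕ) then a c' else 0) +
      if ((c' : ℕ) : ℤ) < (c : ℕ) + 1 then a c' else 0) = if c' = c then a c' else 0 := by
    intro c'
    have := Fin.ext_iff (a := c') (b := c)
    split_ifs <;> first | (exfalso; omega) | simp [CharTwo.add_self_eq_zero]
  rw [profile, profile, reflectMod_of_mem_Icc (by omega) (by omega),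
    reflectMod_of_mem_Icc (by omega) (by omega), ← sum_add_distrib]
  simp only [hpt, sum_ite_eq', mem_univ, if_true]

end Profile

section RotatedForms

variable (F : ℤ → ZMod 2)

def hForm (r c : ℤ) : ZMod 2 := F (c - r) + F (c + r + 1)

def vForm (s c : ℤ) : ZMod 2 := F (c - s) + F (c + s + 2)

theorem vertex_sum_hForm_vForm (r c : ℤ) :
    hForm F r c + hForm F r (c + 1) + vForm F (r - 1) c + vForm F r c = 0 := by
  simp only [hForm, vForm]
  ring_nf
  reduce_mod_char

theorem plaquette_sum_hForm_vForm (s c : ℤ) :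
    hForm F s c + hForm F (s + 1) c + vForm F s (c - 1) + vForm F s c = 0 := by
  simp only [hForm, vForm]
  ring_nf
  reduce_mod_char

end RotatedForms

def ofProfile (j k : ℕ) (F : ℤ → ZMod 2) : SurfEdge j k → ZMod 2 :=
  Sum.elim (fun p => hForm F (p.1 : ℕ) (p.2 : ℕ)) (fun q => vForm F (q.1 : ℕ) (q.2 : ℕ))

section Codeword

variable {F : ℤ → ZMod 2} {j : ℕ}

theorem vForm_eq_zero_of_boundary (heven : Function.Even F)
    (hper : Function.Periodic F (2 * j)) {s c : ℤ}
    (h : s = -1 ∨ s = j - 1 ∨ c = -1 ∨ c = j - 1) : vForm F s c = 0 := by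
  have key : ∀ {x y}, F y = F x → F x + F y = 0 := fun h => h ▸ CharTwo.add_self_eq_zero _
  simp only [vForm]
  rcases h with rfl | rfl | rfl | rfl
  · exact key (congrArg F (by ring))
  · refine key ?_
    rw [← hper (c - (j - 1))]
    exact congrArg F (by ring)
  · refine key ?_
    rw [← heven]
    exact congrArg F (by ring)
  · refine key ?_
    rw [← heven, ← hper]
    exact congrArg F (by ring)

theorem hval_ofProfile {a b : ℤ} (h : 0 ≤ a ∧ a < j ∧ 0 ≤ b ∧ b < j) :
    hval (ofProfile j j F) a b = hForm F a b :=
  gridVal_restrict (hForm F) h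

theorem vval_ofProfile (heven : Function.Even F) (hper : Function.Periodic F (2 * j))
    {s c : ℤ} (h : -1 ≤ s ∧ s ≤ j - 1 ∧ -1 ≤ c ∧ c ≤ j - 1) :
    vval (ofProfile j j F) s c = vForm F s c := by
  by_cases hin : 0 ≤ s ∧ s < (j - 1 : ℕ) ∧ 0 ≤ c ∧ c < (j - 1 : ℕ)
  · exact gridVal_restrict (vForm F) hin
  · rw [vval, gridVal_eq_zero _ hin, vForm_eq_zero_of_boundary heven hper (by omega)]

theorem ofProfile_mem_Ycode (heven : Function.Even F) (hper : Function.Periodic F (2 * j)) :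
    ofProfile j j F ∈ Ycode j j := by
  constructor
  · rintro ⟨⟨r, hr⟩, ⟨c, hc⟩⟩
    rw [Asum_eq, hval_ofProfile (by omega), hval_ofProfile (by omega),
      vval_ofProfile heven hper (by omega), vval_ofProfile heven hper (by omega)]
    exact vertex_sum_hForm_vForm F _ _
  · rintro ⟨⟨s, hs⟩, ⟨c, hc⟩⟩
    rw [Bsum_eq, hval_ofProfile (by omega), hval_ofProfile (by omega),
      vval_ofProfile heven hper (by omega), vval_ofProfile heven hper (by omega)]
    exact plaquette_sum_hForm_vForm F _ _

theorem ofProfile_topRow {k : ℕ} (hj : 0 < j) (c : Fin k) :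
    ofProfile j k F (.inl (⟨0, hj⟩, c)) = F (c : ℕ) + F ((c : ℕ) + 1) := by
  simp [ofProfile, hForm]

end Codeword

/-- The `Y`-code of the standard `j×j` surface code has dimension exactly `j` over `F₂`,
and every codeword is uniquely determined by its restriction to the top row of
horizontal edges. -/
theorem square_Ycode_dim_and_topRow (j : ℕ) (hj : 1 ≤ j) :
    Module.finrank (ZMod 2) (Ycode j j) = j ∧
    (∀ y ∈ Ycode j j, ∀ z ∈ Ycode j j,
      (∀ c : Fin j, y (.inl (⟨0, by omega⟩, c)) = z (.inl (⟨0, by omega⟩, c))) →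
      y = z) := by
  let topRow : Ycode j j →ₗ[ZMod 2] (Fin j → ZMod 2) :=
    (LinearMap.funLeft (ZMod 2) (ZMod 2) fun c => .inl (⟨0, hj⟩, c)).domRestrict (Ycode j j)
  have hinj : Function.Injective topRow := fun y z h =>
    Subtype.ext (eq_of_mem_Ycode_of_topRow_eq hj y.2 z.2 (congrFun h))
  have hsurj : Function.Surjective topRow := fun a =>
    ⟨⟨ofProfile j j (profile a), ofProfile_mem_Ycode (profile_even a) (profile_periodic a)⟩,
      funext fun c => (ofProfile_topRow hj c).trans (profile_add_profile_succ a c)⟩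
  refine ⟨?_, fun y hy z hz => eq_of_mem_Ycode_of_topRow_eq hj hy hz⟩
  rw [(LinearEquiv.ofBijective topRow ⟨hinj, hsurj⟩).finrank_eq, Module.finrank_fin_fun]
end

section
/- For the rotated j×k surface code with j and k odd, the all-Y operator Y^{⊗n} (n = jk) is the unique nontrivial Y-type operator commuting with all stabilizer generators; hence the code has exactly one Y-type logical operator, no nontrivial Y-type stabilizers, and Y-distance d_Y = n. -/
/-!
A `Y`-type operator commuting with every check is constant on the grid. Each bulk face
says that the sum of two horizontally adjacent entries does not change from one row to the
next, so it equals its value on the top or bottom row, where the boundary check on that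
column pair (top for even pairs, bottom for odd ones) makes it vanish: every row is
constant. The left and right boundary checks then glue consecutive rows together through
column `0` or column `k - 1`.
-/

/-- Commutation of a `Y`-type operator with support `α` (on the `j × k` grid of qubits of
the rotated surface code, qubit `(r, c)` for `r < j`, `c < k`) with all stabilizer
generators: weight-4 bulk checks on each unit face, and weight-2 boundary checks, which
alternate along the boundary (top boundary at even columns, bottom at odd columns, left
at odd rows, right at even rows).  A `Y`-type operator commutes with an `X`- or `Z`-type
check iff the number of `Y`'s on the support of the check is even. -/
def RotatedYCommutes (j k : ℕ) (α : ℕ → ℕ → ZMod 2) : Prop :=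
  (∀ r c, r + 1 < j → c + 1 < k →
    α r c + α r (c + 1) + α (r + 1) c + α (r + 1) (c + 1) = 0) ∧
  (∀ c, c % 2 = 0 → c + 1 < k → α 0 c + α 0 (c + 1) = 0) ∧
  (∀ c, c % 2 = 1 → c + 1 < k → α (j - 1) c + α (j - 1) (c + 1) = 0) ∧
  (∀ r, r % 2 = 1 → r + 1 < j → α r 0 + α (r + 1) 0 = 0) ∧
  (∀ r, r % 2 = 0 → r + 1 < j → α r (k - 1) + α (r + 1) (k - 1) = 0)

lemma apply_eq_apply_zero_of_eq_succ {M : Type*} {m : ℕ} (f : ℕ → M)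
    (hf : ∀ n, n + 1 < m → f n = f (n + 1)) : ∀ n, n < m → f n = f 0 := by
  intro n hn
  induction n with
  | zero => rfl
  | succ n ih => rw [← hf n hn, ih (Nat.lt_of_succ_lt hn)]

lemma rotatedYCommutes_one (j k : ℕ) : RotatedYCommutes j k (fun _ _ => 1) :=
  ⟨fun _ _ _ _ => rfl, fun _ _ _ => rfl, fun _ _ _ => rfl, fun _ _ _ => rfl, fun _ _ _ => rfl⟩

namespace RotatedYCommutes

variable {j k : ℕ} {α : ℕ → ℕ → ZMod 2}

lemma pair_sum_eq_top (h : RotatedYCommutes j k α) {r c : ℕ} (hr : r < j) (hc : c + 1 < k) :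
    α r c + α r (c + 1) = α 0 c + α 0 (c + 1) := by
  refine apply_eq_apply_zero_of_eq_succ (fun n => α n c + α n (c + 1)) (fun n hn => ?_) r hr
  exact CharTwo.add_eq_zero.mp (by rw [← add_assoc]; exact h.1 n c hn hc)

lemma eq_succ_col (h : RotatedYCommutes j k α) {r c : ℕ} (hr : r < j) (hc : c + 1 < k) :
    α r c = α r (c + 1) := by
  refine CharTwo.add_eq_zero.mp ?_
  rw [h.pair_sum_eq_top hr hc]
  rcases Nat.mod_two_eq_zero_or_one c with heven | hodd
  · exact h.2.1 c heven hc
  · rw [← h.pair_sum_eq_top (Nat.sub_lt (by omega) one_pos) hc]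
    exact h.2.2.1 c hodd hc

lemma eq_col_zero (h : RotatedYCommutes j k α) {r c : ℕ} (hr : r < j) (hc : c < k) :
    α r c = α r 0 :=
  apply_eq_apply_zero_of_eq_succ (α r) (fun _ hn => h.eq_succ_col hr hn) c hc

lemma eq_succ_row_col_zero (h : RotatedYCommutes j k α) (hk : 0 < k) {r : ℕ} (hr : r + 1 < j) :
    α r 0 = α (r + 1) 0 := by
  rcases Nat.mod_two_eq_zero_or_one r with heven | hodd
  · have hlast : k - 1 < k := Nat.sub_lt hk one_pos
    rw [← h.eq_col_zero (by omega) hlast, ← h.eq_col_zero hr hlast]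
    exact CharTwo.add_eq_zero.mp (h.2.2.2.2 r heven hr)
  · exact CharTwo.add_eq_zero.mp (h.2.2.2.1 r hodd hr)

lemma eq_origin (h : RotatedYCommutes j k α) {r c : ℕ} (hr : r < j) (hc : c < k) :
    α r c = α 0 0 := by
  rw [h.eq_col_zero hr hc]
  exact apply_eq_apply_zero_of_eq_succ (α · 0)
    (fun _ hn => h.eq_succ_row_col_zero (by omega) hn) r hr

end RotatedYCommutes

theorem rotated_unique_Y_logical_general (j k : ℕ) :
    RotatedYCommutes j k (fun _ _ => 1) ∧
    (∀ α : ℕ → ℕ → ZMod 2, RotatedYCommutes j k α →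
      (∀ r c, r < j → c < k → α r c = 0) ∨ (∀ r c, r < j → c < k → α r c = 1)) := by
  refine ⟨rotatedYCommutes_one j k, fun α hα => ?_⟩
  obtain h0 | h1 : α 0 0 = 0 ∨ α 0 0 = 1 := by generalize α 0 0 = x; decide +revert
  · exact Or.inl fun r c hr hc => (hα.eq_origin hr hc).trans h0
  · exact Or.inr fun r c hr hc => (hα.eq_origin hr hc).trans h1

/-- For the rotated `j×k` surface code with `j` and `k` odd, the all-`Y` operator
`Y^{⊗n}` (`n = jk`) commutes with all stabilizer generators, and every `Y`-type operator
commuting with all stabilizer generators is (on the grid) either the identity or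
`Y^{⊗n}`: the code has exactly one `Y`-type logical operator, no nontrivial `Y`-type
stabilizers, and `Y`-distance `d_Y = n`. -/
theorem rotated_unique_Y_logical (j k : ℕ) (hj : Odd j) (hk : Odd k) :
    RotatedYCommutes j k (fun _ _ => 1) ∧
    (∀ α : ℕ → ℕ → ZMod 2, RotatedYCommutes j k α →
      (∀ r c, r < j → c < k → α r c = 0) ∨ (∀ r c, r < j → c < k → α r c = 1)) :=
  rotated_unique_Y_logical_general j k
end

section
/- The X-distance of the standard j×k surface code is j: every X-type logical operator has weight at least j, and there exists one of weight exactly j. -/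
/-!
The row sum `∑ c, x (r, c)` pairs `x` with the logical `Z` supported on row `r`. It vanishes on
every vertex star, and summing the plaquette conditions of one plaquette row (each vertical edge
occurs twice) shows that all row sums of an `x` commuting with the plaquettes agree. Conversely,
such an `x` with vanishing row sums is the coboundary of the vertex potential given by prefix
sums along the rows: on horizontal edges because the row sums vanish, on vertical edges because
the plaquette conditions telescope. So a logical `X` has every row sum equal to `1`, hence meets
every row and has weight at least `j`; the column of horizontal edges at the left boundary
attains `j`.
-/

open Finset

section ExtendZero

variable {M : Type*} [AddCommMonoid M] {n : ℕ}

def extendZero (g : Fin n → M) (m : ℕ) : M := if h : m < n then g ⟨m, h⟩ else 0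

def extendZeroShift (g : Fin n → M) : ℕ → M
  | 0 => 0
  | m + 1 => extendZero g m

@[simp]
lemma extendZero_val (g : Fin n → M) (i : Fin n) : extendZero g i = g i := by
  simp [extendZero]

lemma extendZero_of_lt (g : Fin n → M) {m : ℕ} (h : m < n) : extendZero g m = g ⟨m, h⟩ :=
  dif_pos h

lemma extendZero_of_le (g : Fin n → M) {m : ℕ} (h : n ≤ m) : extendZero g m = 0 :=
  dif_neg (by omega)

lemma sum_ite_val_eq (g : Fin n → M) (m : ℕ) :
    ∑ i : Fin n, (if (i : ℕ) = m then g i else 0) = extendZero g m := by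
  unfold extendZero
  split_ifs with h
  · rw [Fintype.sum_eq_single ⟨m, h⟩ fun i hi => if_neg fun e => hi (Fin.ext e), if_pos rfl]
  · exact sum_eq_zero fun i _ => if_neg (by omega)

lemma sum_ite_val_add_one_eq (g : Fin n → M) (m : ℕ) :
    ∑ i : Fin n, (if (i : ℕ) + 1 = m then g i else 0) = extendZeroShift g m := by
  cases m with
  | zero => simp [extendZeroShift]
  | succ m => simpa [extendZeroShift] using sum_ite_val_eq g m

lemma extendZero_succ_of_eq_zero {P : ℕ → M} (hP : P (n + 1) = 0) {m : ℕ} (hm : m ≤ n) :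
    extendZero (fun i : Fin n => P (i + 1)) m = P (m + 1) := by
  unfold extendZero
  split_ifs with h
  · rfl
  · rw [show m = n by omega, hP]

lemma extendZeroShift_succ_of_eq_zero {P : ℕ → M} (h0 : P 0 = 0) (hP : P (n + 1) = 0)
    {m : ℕ} (hm : m ≤ n + 1) :
    extendZeroShift (fun i : Fin n => P (i + 1)) m = P m := by
  cases m with
  | zero => exact h0.symm
  | succ m => exact extendZero_succ_of_eq_zero hP (by omega)

lemma extendZeroShift_sub_one {m : ℕ} (g : Fin (m - 1) → M) : extendZeroShift g m = 0 := by
  cases m with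
  | zero => rfl
  | succ m => exact extendZero_of_le g (by omega)

end ExtendZero

lemma sum_range_add_succ_of_charTwo {R : Type*} [Ring R] [CharP R 2] (f : ℕ → R) (n : ℕ) :
    ∑ i ∈ range n, (f i + f (i + 1)) = f 0 + f n := by
  simpa [CharTwo.sub_eq_add, add_comm] using sum_range_sub f n

lemma ite_or_eq_add_of_not_and {M : Type*} [AddMonoid M] {p q : Prop} [Decidable p]
    [Decidable q] (h : ¬(p ∧ q)) (a : M) :
    (if p ∨ q then a else 0) = (if p then a else 0) + (if q then a else 0) := by
  by_cases hp : p <;> by_cases hq : q <;> simp_all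

section SurfaceCode

variable {j k : ℕ}

def hRow (x : SurfEdge j k → ZMod 2) (r : Fin j) : ℕ → ZMod 2 :=
  extendZero fun c => x (.inl (r, c))

/-- `vRow x s m` is the vertical edge of plaquette row `s` between plaquette columns `m - 1` and
`m`, and `0` at the rough boundaries `m = 0` and `m = k`. -/
def vRow (x : SurfEdge j k → ZMod 2) (s : Fin (j - 1)) : ℕ → ZMod 2 :=
  extendZeroShift fun c => x (.inr (s, c))

lemma Bsum_eq_s13 (x : SurfEdge j k → ZMod 2) (s : Fin (j - 1)) (c : Fin k) :
    Bsum (s, c) x = hRow x ⟨s, by omega⟩ c + hRow x ⟨s + 1, by omega⟩ c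
      + (vRow x s c + vRow x s (c + 1)) := by
  rw [Bsum, Fintype.sum_sum_type, Fintype.sum_prod_type, Fintype.sum_prod_type_right]
  simp only [pInd, ite_mul, one_mul, zero_mul, ite_and, sum_ite_eq', mem_univ, if_true]
  rw [sum_congr rfl fun i _ => ite_or_eq_add_of_not_and (by omega) _,
    sum_congr rfl fun i _ => ite_or_eq_add_of_not_and (by omega) _]
  simp only [sum_add_distrib, sum_ite_val_eq, sum_ite_val_add_one_eq]
  simp (disch := omega) only [extendZero_of_lt, hRow, vRow, extendZeroShift]

lemma sum_range_hRow_add_hRow (x : SurfEdge j k → ZMod 2) (hB : ∀ p, Bsum p x = 0)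
    (s : Fin (j - 1)) {n : ℕ} (hn : n ≤ k) :
    ∑ i ∈ range n, (hRow x ⟨s, by omega⟩ i + hRow x ⟨s + 1, by omega⟩ i) = vRow x s n := by
  have hplaq : ∀ i ∈ range n,
      hRow x ⟨s, by omega⟩ i + hRow x ⟨s + 1, by omega⟩ i = vRow x s i + vRow x s (i + 1) := by
    intro i hi
    exact CharTwo.add_eq_zero.1 ((Bsum_eq_s13 x s ⟨i, by simp at hi; omega⟩).symm.trans (hB _))
  rw [sum_congr rfl hplaq, sum_range_add_succ_of_charTwo]
  simp [vRow, extendZeroShift]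

def rowSum (r : Fin j) : (SurfEdge j k → ZMod 2) →ₗ[ZMod 2] ZMod 2 where
  toFun x := ∑ c, x (.inl (r, c))
  map_add' x y := by simp [sum_add_distrib]
  map_smul' a x := by simp [mul_sum]

lemma rowSum_apply (r : Fin j) (x : SurfEdge j k → ZMod 2) :
    rowSum r x = ∑ c, x (.inl (r, c)) := rfl

lemma sum_range_hRow (x : SurfEdge j k → ZMod 2) (r : Fin j) :
    ∑ i ∈ range k, hRow x r i = rowSum r x := by
  rw [rowSum_apply, ← Fin.sum_univ_eq_sum_range]
  simp [hRow]

lemma rowSum_eq_rowSum_succ (x : SurfEdge j k → ZMod 2) (hB : ∀ p, Bsum p x = 0)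
    (s : Fin (j - 1)) : rowSum ⟨s, by omega⟩ x = rowSum ⟨s + 1, by omega⟩ x := by
  have := sum_range_hRow_add_hRow x hB s le_rfl
  rwa [sum_add_distrib, sum_range_hRow, sum_range_hRow, vRow, extendZeroShift_sub_one,
    CharTwo.add_eq_zero] at this

lemma rowSum_eq_rowSum_zero (x : SurfEdge j k → ZMod 2) (hB : ∀ p, Bsum p x = 0)
    (r : Fin j) : rowSum r x = rowSum ⟨0, r.pos⟩ x := by
  obtain ⟨r, hr⟩ := r
  induction r with
  | zero => rfl
  | succ r ih => exact (rowSum_eq_rowSum_succ x hB ⟨r, by omega⟩).symm.trans (ih (by omega))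

lemma rowSum_eq_rowSum (x : SurfEdge j k → ZMod 2) (hB : ∀ p, Bsum p x = 0)
    (r r' : Fin j) : rowSum r x = rowSum r' x :=
  (rowSum_eq_rowSum_zero x hB r).trans (rowSum_eq_rowSum_zero x hB r').symm

lemma rowSum_vInd (r : Fin j) (v : SurfVertex j k) : rowSum r (vInd v) = 0 := by
  rw [rowSum_apply]
  by_cases hr : r = v.1
  · simp only [vInd, hr, true_and]
    rw [sum_congr rfl fun c _ => ite_or_eq_add_of_not_and (by omega) _, sum_add_distrib,
      sum_ite_val_eq (fun _ => 1), sum_ite_val_eq (fun _ => 1), extendZero_of_lt _ (by omega),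
      extendZero_of_lt _ (by omega), CharTwo.add_self_eq_zero]
  · simp [vInd, hr]

lemma rowSum_eq_zero_of_mem_span (r : Fin j) {x : SurfEdge j k → ZMod 2}
    (hx : x ∈ Submodule.span (ZMod 2) (Set.range vInd)) : rowSum r x = 0 := by
  refine (Submodule.span_le (p := LinearMap.ker (rowSum r))).2 ?_ hx
  rintro _ ⟨v, rfl⟩
  exact rowSum_vInd r v

lemma sum_smul_vInd_inl (a : SurfVertex j k → ZMod 2) (r : Fin j) (c : Fin k) :
    (∑ v, a v • vInd v) (.inl (r, c)) =
      extendZero (fun c' => a (r, c')) c + extendZeroShift (fun c' => a (r, c')) c := by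
  simp only [Finset.sum_apply, Pi.smul_apply, smul_eq_mul, vInd, mul_ite, mul_one, mul_zero]
  rw [Fintype.sum_prod_type]
  simp only [ite_and]
  rw [sum_congr rfl fun _ _ => sum_ite_irrel _ _ _ _]
  simp only [sum_const_zero, sum_ite_eq, mem_univ, if_true]
  rw [sum_congr rfl fun c' _ => ite_or_eq_add_of_not_and (by omega) _, sum_add_distrib]
  simp only [eq_comm (a := (c : ℕ)), sum_ite_val_eq, sum_ite_val_add_one_eq]

lemma sum_smul_vInd_inr (a : SurfVertex j k → ZMod 2) (s : Fin (j - 1)) (c : Fin (k - 1)) :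
    (∑ v, a v • vInd v) (.inr (s, c)) = a (⟨s, by omega⟩, c) + a (⟨s + 1, by omega⟩, c) := by
  simp only [Finset.sum_apply, Pi.smul_apply, smul_eq_mul, vInd, mul_ite, mul_one, mul_zero]
  rw [Fintype.sum_prod_type_right]
  simp only [ite_and]
  rw [sum_congr rfl fun _ _ => sum_ite_irrel _ _ _ _]
  simp only [sum_const_zero, sum_ite_eq, mem_univ, if_true]
  rw [sum_congr rfl fun r _ => ite_or_eq_add_of_not_and (by omega) _, sum_add_distrib]
  simp only [eq_comm (a := (s : ℕ) + 1), eq_comm (a := (s : ℕ)), sum_ite_val_eq]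
  rw [extendZero_of_lt _ (by omega), extendZero_of_lt _ (by omega), add_comm]

def rowPotential (x : SurfEdge j k → ZMod 2) (v : SurfVertex j k) : ZMod 2 :=
  ∑ i ∈ range (v.2 + 1), hRow x v.1 i

lemma eq_sum_rowPotential_smul_vInd (x : SurfEdge j k → ZMod 2) (hB : ∀ p, Bsum p x = 0)
    (hL : ∀ r, rowSum r x = 0) : x = ∑ v, rowPotential x v • vInd v := by
  funext e
  rcases e with ⟨r, c⟩ | ⟨s, c⟩
  · set P : ℕ → ZMod 2 := fun m => ∑ i ∈ range m, hRow x r i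
    have hPk : P (k - 1 + 1) = 0 := by
      rw [Nat.sub_add_cancel c.pos]
      exact (sum_range_hRow x r).trans (hL r)
    rw [sum_smul_vInd_inl]
    change _ = extendZero (fun c' : Fin (k - 1) => P (c' + 1)) c
      + extendZeroShift (fun c' : Fin (k - 1) => P (c' + 1)) c
    rw [extendZero_succ_of_eq_zero hPk (by omega),
      extendZeroShift_succ_of_eq_zero (sum_range_zero _) hPk (by omega)]
    rw [show P (c + 1) = P c + hRow x r c from sum_range_succ _ _, add_right_comm,
      CharTwo.add_self_eq_zero, zero_add, hRow, extendZero_val]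
  · rw [sum_smul_vInd_inr]
    simp only [rowPotential]
    rw [← sum_add_distrib, sum_range_hRow_add_hRow x hB s (by omega)]
    simp [vRow, extendZeroShift]

lemma mem_span_vInd_of_rowSum_eq_zero (x : SurfEdge j k → ZMod 2) (hB : ∀ p, Bsum p x = 0)
    (hL : ∀ r, rowSum r x = 0) : x ∈ Submodule.span (ZMod 2) (Set.range vInd) := by
  rw [eq_sum_rowPotential_smul_vInd x hB hL]
  exact Submodule.sum_mem _ fun v _ => Submodule.smul_mem _ _ (Submodule.subset_span ⟨v, rfl⟩)

lemma card_le_swt_of_rowSum_ne_zero (x : SurfEdge j k → ZMod 2) (hL : ∀ r, rowSum r x ≠ 0) :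
    j ≤ swt x := by
  have hrow (r : Fin j) : ∃ c, x (.inl (r, c)) = 1 := by
    obtain ⟨c, -, hc⟩ := exists_ne_zero_of_sum_ne_zero (rowSum_apply r x ▸ hL r)
    exact ⟨c, Fin.eq_one_of_ne_zero _ hc⟩
  choose c hc using hrow
  simpa [swt] using card_le_card_of_injOn (s := univ) (t := {e | x e = 1})
    (fun r => .inl (r, c r)) (fun r _ => by simpa using hc r) (fun r _ r' _ h => by
      simp only [Sum.inl.injEq, Prod.mk.injEq] at h; exact h.1)

lemma card_filter_val_eq_zero (hk : 0 < k) : #{c : Fin k | (c : ℕ) = 0} = 1 :=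
  card_eq_one.2 ⟨⟨0, hk⟩, by ext; simp [Fin.ext_iff]⟩

variable (j k) in
def leftColumn : SurfEdge j k → ZMod 2 :=
  Sum.elim (fun rc => if (rc.2 : ℕ) = 0 then 1 else 0) 0

lemma Bsum_leftColumn (p : SurfPlaq j k) : Bsum p (leftColumn j k) = 0 := by
  have hv (m : ℕ) : vRow (leftColumn j k) p.1 m = 0 := by
    cases m <;> simp [vRow, extendZeroShift, extendZero, leftColumn]
  rw [Bsum_eq_s13, hv, hv, add_zero, add_zero]
  exact CharTwo.add_self_eq_zero (R := ZMod 2) _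

lemma rowSum_leftColumn (hk : 0 < k) (r : Fin j) : rowSum r (leftColumn j k) = 1 := by
  simp [rowSum_apply, leftColumn, card_filter_val_eq_zero hk]

lemma swt_leftColumn (hk : 0 < k) : swt (leftColumn j k) = j := by
  rw [swt, card_filter, Fintype.sum_sum_type, Fintype.sum_prod_type]
  simp [leftColumn, card_filter_val_eq_zero hk]

end SurfaceCode

/-- The `X`-distance of the standard `j×k` surface code is `j`: every `X`-type logical
operator (an `X`-configuration commuting with all plaquette stabilizers that is not a
product of vertex stabilizers) has weight at least `j`, and there exists one of weight
exactly `j`. -/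
theorem surface_X_distance (j k : ℕ) (hj : 1 ≤ j) (hk : 1 ≤ k) :
    IsLeast {w | ∃ x : SurfEdge j k → ZMod 2,
      (∀ p, Bsum p x = 0) ∧
        x ∉ Submodule.span (ZMod 2) (Set.range (vInd (j := j) (k := k))) ∧
        swt x = w} j := by
  refine ⟨⟨leftColumn j k, Bsum_leftColumn, fun h => ?_, swt_leftColumn hk⟩, ?_⟩
  · simpa [rowSum_leftColumn hk] using rowSum_eq_zero_of_mem_span ⟨0, hj⟩ h
  · rintro _ ⟨x, hB, hx, rfl⟩
    refine card_le_swt_of_rowSum_ne_zero x fun r hr => hx ?_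
    exact mem_span_vInd_of_rowSum_eq_zero x hB fun r' => (rowSum_eq_rowSum x hB r' r).trans hr
end

section
/- The group generated by the two diagonal reflections of the j×j surface code lattice is isomorphic to Z_2 × Z_2, and its action on the set of edges has exactly one orbit of size 1, exactly 2(j−1) orbits of size 2, and all remaining orbits of size 4; consequently the number of orbits is j(j+1)/2. -/
/-- Edges (physical qubits) of the standard `j×j` surface code lattice: `j²` horizontal
edges and `(j-1)²` vertical edges. -/
abbrev SqEdge (j : ℕ) := (Fin j × Fin j) ⊕ (Fin (j - 1) × Fin (j - 1))

/-- Reflection of the `j×j` surface code lattice across the main diagonal `δ¹`. -/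
def diagRefl1 (j : ℕ) : Equiv.Perm (SqEdge j) :=
  Function.Involutive.toPerm
    (fun e => match e with
      | .inl (r, c) => .inl (c, r)
      | .inr (s, t) => .inr (t, s))
    (by rintro (⟨r, c⟩ | ⟨s, t⟩) <;> rfl)

/-- Reflection of the `j×j` surface code lattice across the antidiagonal `δ^(j+1)`. -/
def diagRefl2 (j : ℕ) : Equiv.Perm (SqEdge j) :=
  Function.Involutive.toPerm
    (fun e => match e with
      | .inl (r, c) => .inl (c.rev, r.rev)
      | .inr (s, t) => .inr (t.rev, s.rev))
    (by rintro (⟨r, c⟩ | ⟨s, t⟩) <;> simp)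

/-- The group `R` generated by the two diagonal reflections of the `j×j` lattice. -/
def reflGroup (j : ℕ) : Subgroup (Equiv.Perm (SqEdge j)) :=
  Subgroup.closure {diagRefl1 j, diagRefl2 j}

/-!
The two reflections are commuting involutions, distinct and nontrivial once `j ≥ 2`, so they
generate a Klein four-group `{1, δ¹, δ^{j+1}, δ¹δ^{j+1}}` and every orbit has size `1`, `2` or `4`.
Burnside's lemma counts the orbits: the identity fixes all `j² + (j-1)²` edges, each reflection
fixes the `2j - 1` edges on its diagonal and the half-turn `δ¹δ^{j+1}` fixes only the central
edge, so `4 · #orbits = 2j(j+1)`. The orbits of size `1` are the common fixed points of the two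
reflections, i.e. the central edge alone, and comparing `Σ |orbit| = #edges` with `#orbits`
then leaves exactly `2(j-1)` orbits of size `2`.
-/

open MulAction

lemma Subgroup.coe_closure_pair_of_commute {G : Type*} [Group G] {a b : G} (ha : a * a = 1)
    (hb : b * b = 1) (hab : Commute a b) :
    (Subgroup.closure {a, b} : Set G) = {1, a, b, a * b} := by
  have haa (x : G) : a * (a * x) = x := by rw [← mul_assoc, ha, one_mul]
  have hba (x : G) : b * (a * x) = a * (b * x) := by rw [← mul_assoc, ← hab.eq, mul_assoc]
  have ha' : a⁻¹ = a := inv_eq_of_mul_eq_one_right ha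
  have hb' : b⁻¹ = b := inv_eq_of_mul_eq_one_right hb
  refine subset_antisymm (fun g hg => ?_) ?_
  · induction hg using Subgroup.closure_induction with
    | mem x hx => rcases hx with rfl | rfl <;> simp
    | one => simp
    | mul x y _ _ hx hy =>
      rcases hx with rfl | rfl | rfl | rfl <;> rcases hy with rfl | rfl | rfl | rfl <;>
        simp [mul_assoc, ha, hb, haa, hba, hab.eq.symm]
    | inv x _ hx => rcases hx with rfl | rfl | rfl | rfl <;> simp [ha', hb', hab.eq.symm]
  · rintro g (rfl | rfl | rfl | rfl)
    · exact one_mem _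
    · exact Subgroup.subset_closure (by simp)
    · exact Subgroup.subset_closure (by simp)
    · exact mul_mem (Subgroup.subset_closure (by simp)) (Subgroup.subset_closure (by simp))

structure IsKleinFourGenerators {G : Type*} [Group G] (a b : G) : Prop where
  mul_self_left : a * a = 1
  mul_self_right : b * b = 1
  commute : Commute a b
  left_ne_one : a ≠ 1
  right_ne_one : b ≠ 1
  ne : a ≠ b

namespace IsKleinFourGenerators

variable {G : Type*} [Group G] {a b : G}

lemma coe_closure (h : IsKleinFourGenerators a b) :
    (Subgroup.closure {a, b} : Set G) = {1, a, b, a * b} :=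
  Subgroup.coe_closure_pair_of_commute h.mul_self_left h.mul_self_right h.commute

lemma mul_ne_one (h : IsKleinFourGenerators a b) : a * b ≠ 1 := fun hab =>
  h.ne (mul_eq_one_iff_eq_inv.mp hab |>.trans (inv_eq_of_mul_eq_one_right h.mul_self_right))

lemma isKleinFour (h : IsKleinFourGenerators a b) : IsKleinFour (Subgroup.closure {a, b}) := by
  have : Nontrivial (Subgroup.closure {a, b}) :=
    ⟨⟨⟨a, Subgroup.subset_closure (by simp)⟩, 1, fun ha => h.left_ne_one congr(($ha : G))⟩⟩
  constructor
  · rw [← SetLike.coe_sort_coe, Nat.card_coe_set_eq, h.coe_closure, Set.ncard_eq_four]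
    exact ⟨1, a, b, a * b, h.left_ne_one.symm, h.right_ne_one.symm, h.mul_ne_one.symm, h.ne,
      fun hab => h.right_ne_one (mul_eq_left.mp hab.symm),
      fun hab => h.left_ne_one (mul_eq_right.mp hab.symm), rfl⟩
  · refine (Monoid.exponent_eq_prime_iff Nat.prime_two).mpr fun g hg => orderOf_eq_prime ?_ hg
    obtain ⟨g, hg'⟩ := g
    have hgg : g * g = 1 := by
      rw [← SetLike.mem_coe, h.coe_closure] at hg'
      obtain rfl | rfl | rfl | rfl := hg'
      · exact one_mul 1
      · exact h.mul_self_left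
      · exact h.mul_self_right
      · rw [mul_assoc, ← mul_assoc b, ← h.commute.eq, mul_assoc, h.mul_self_right, mul_one,
          h.mul_self_left]
    ext
    simpa [sq] using hgg

lemma sum_closure {M : Type*} [AddCommMonoid M] (h : IsKleinFourGenerators a b)
    [Fintype (Subgroup.closure {a, b})] (f : G → M) :
    ∑ g : Subgroup.closure {a, b}, f g = f 1 + f a + f b + f (a * b) := by
  classical
  rw [← Finset.sum_subtype {1, a, b, a * b} (fun g => by simp [← SetLike.mem_coe, h.coe_closure]),
    Finset.sum_insert (by simp [h.left_ne_one.symm, h.right_ne_one.symm, h.mul_ne_one.symm]),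
    Finset.sum_insert (by simp [h.ne, h.right_ne_one]),
    Finset.sum_insert (by simp [h.left_ne_one]), Finset.sum_singleton, add_assoc, add_assoc]

lemma card_orbitRel_quotient_mul_four (h : IsKleinFourGenerators a b) {X : Type*}
    [MulAction G X] [Finite X] :
    Nat.card (orbitRel.Quotient (Subgroup.closure {a, b}) X) * 4 =
      Nat.card X + Nat.card (fixedBy X a) + Nat.card (fixedBy X b) +
        Nat.card (fixedBy X (a * b)) := by
  classical
  have := h.isKleinFour
  have : Finite (Subgroup.closure {a, b}) := IsKleinFour.instFinite
  have : Fintype X := Fintype.ofFinite X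
  have : Fintype (Subgroup.closure {a, b}) := Fintype.ofFinite _
  have : Fintype (orbitRel.Quotient (Subgroup.closure {a, b}) X) := Fintype.ofFinite _
  have burnside := sum_card_fixedBy_eq_card_orbits_mul_card_group (Subgroup.closure {a, b}) X
  simp only [← Nat.card_eq_fintype_card, IsKleinFour.card_four] at burnside
  rw [← burnside]
  exact (h.sum_closure (fun g => Nat.card (fixedBy X g))).trans (by simp)

end IsKleinFourGenerators

namespace MulAction

variable {G X : Type*} [Group G] [MulAction G X]

lemma natCard_orbit_eq_one_iff {x : X} : Nat.card (orbit G x) = 1 ↔ x ∈ fixedPoints G X := by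
  rw [Nat.card_eq_one_iff_unique, ← subsingleton_orbit_iff_mem_fixedPoints, Set.subsingleton_coe]
  exact and_iff_left (nonempty_orbit x).to_subtype

lemma mem_fixedPoints_closure_iff {S : Set G} {x : X} :
    x ∈ fixedPoints (Subgroup.closure S) X ↔ ∀ g ∈ S, g • x = x := by
  change (∀ g : Subgroup.closure S, (g : G) • x = x) ↔ _
  exact Subtype.forall.trans (Subgroup.closure_le (stabilizer G x))

lemma natCard_orbitRel_quotient_orbit_dvd (q : orbitRel.Quotient G X) :
    Nat.card q.orbit ∣ Nat.card G := by
  induction q using Quotient.inductionOn' with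
  | h x =>
    rw [orbitRel.Quotient.orbit_mk, Nat.card_coe_set_eq, ← index_stabilizer]
    exact (stabilizer G x).index_dvd_card

lemma natCard_orbitRel_quotient_orbit_eq_one_or_two_or_four (hG : Nat.card G = 4)
    (q : orbitRel.Quotient G X) :
    Nat.card q.orbit = 1 ∨ Nat.card q.orbit = 2 ∨ Nat.card q.orbit = 4 := by
  have hdvd := hG ▸ natCard_orbitRel_quotient_orbit_dvd q
  have := Nat.le_of_dvd (by norm_num) hdvd
  interval_cases Nat.card q.orbit <;> omega

lemma natCard_trivial_orbits_eq_natCard_fixedPoints :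
    Nat.card {q : orbitRel.Quotient G X | Nat.card q.orbit = 1} = Nat.card (fixedPoints G X) := by
  symm
  refine Nat.card_congr (Equiv.ofBijective (fun x => ⟨Quotient.mk'' x.1, ?_⟩) ⟨?_, ?_⟩)
  · exact natCard_orbit_eq_one_iff.mpr x.2
  · rintro ⟨x, hx⟩ ⟨y, hy⟩ hxy
    obtain ⟨g, rfl⟩ := Quotient.eq''.mp (congr_arg Subtype.val hxy)
    simp [hy g]
  · rintro ⟨q, hq⟩
    induction q using Quotient.inductionOn' with
    | h x => exact ⟨⟨x, natCard_orbit_eq_one_iff.mp hq⟩, rfl⟩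

lemma sum_natCard_orbitRel_quotient_orbit [Finite X] [Fintype (orbitRel.Quotient G X)] :
    ∑ q : orbitRel.Quotient G X, Nat.card q.orbit = Nat.card X := by
  rw [Nat.card_congr (selfEquivSigmaOrbits' G X), Nat.card_sigma]

end MulAction

lemma four_mul_natCard_eq_of_forall_eq_one_or_two_or_four {β : Type*} [Fintype β] (f : β → ℕ)
    (hf : ∀ b, f b = 1 ∨ f b = 2 ∨ f b = 4) :
    4 * Nat.card β = ∑ b, f b + 3 * Nat.card {b | f b = 1} + 2 * Nat.card {b | f b = 2} := by
  classical
  simp only [Nat.card_eq_fintype_card, Fintype.card_subtype, Finset.card_filter, Finset.mul_sum,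
    ← Finset.sum_add_distrib, Set.mem_ofPred_eq]
  rw [Fintype.card_eq_sum_ones, Finset.mul_sum]
  refine Finset.sum_congr rfl fun b _ => ?_
  rcases hf b with h | h | h <;> simp [h]

section ProdFixedPoints

variable {β : Type*} {f : β → β}

lemma natCard_fixed_swap_map (hf : Function.Involutive f) :
    Nat.card {p : β × β // (f p.2, f p.1) = p} = Nat.card β :=
  Nat.card_congr
    { toFun := fun p => p.1.1
      invFun := fun x => ⟨(x, f x), by simp [hf x]⟩
      left_inv := by
        rintro ⟨⟨x, y⟩, h⟩
        simp only [Prod.mk.injEq] at h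
        simp [← h.2]
      right_inv := fun _ => rfl }

lemma natCard_fixed_swap : Nat.card {p : β × β // p.swap = p} = Nat.card β :=
  natCard_fixed_swap_map (f := id) fun _ => rfl

lemma natCard_fixed_map [Finite β] :
    Nat.card {p : β × β // (f p.1, f p.2) = p} = Nat.card {x // f x = x} ^ 2 := by
  rw [sq, ← Nat.card_prod]
  exact Nat.card_congr ((Equiv.subtypeEquivRight fun _ => Prod.ext_iff).trans
    (Equiv.subtypeProdEquivProd (p := fun x => f x = x) (q := fun x => f x = x)))

lemma natCard_fixed_swap_and_swap_map :
    Nat.card {p : β × β // p.swap = p ∧ (f p.2, f p.1) = p} = Nat.card {x // f x = x} :=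
  Nat.card_congr
    { toFun := fun p => ⟨p.1.1, by
        obtain ⟨⟨x, y⟩, h₁, h₂⟩ := p
        simp only [Prod.swap, Prod.mk.injEq] at h₁ h₂
        exact h₂.2.trans h₁.1⟩
      invFun := fun x => ⟨(x, x), rfl, by simp [x.2]⟩
      left_inv := by
        rintro ⟨⟨x, y⟩, h₁, -⟩
        simp only [Prod.swap, Prod.mk.injEq] at h₁
        simp [h₁.2]
      right_inv := fun _ => rfl }

end ProdFixedPoints

lemma Fin.natCard_rev_fixed (k : ℕ) : Nat.card {i : Fin k // i.rev = i} = k % 2 := by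
  obtain ⟨m, rfl | rfl⟩ := Nat.even_or_odd' k
  · have : IsEmpty {i : Fin (2 * m) // i.rev = i} :=
      ⟨fun ⟨i, hi⟩ => by rw [Fin.ext_iff, Fin.val_rev] at hi; omega⟩
    simp
  · rw [show (2 * m + 1) % 2 = 1 by omega, Nat.card_eq_one_iff_exists]
    refine ⟨⟨⟨m, by omega⟩, by ext; simp; omega⟩, fun ⟨i, hi⟩ => ?_⟩
    rw [Fin.ext_iff, Fin.val_rev] at hi
    ext
    simp
    omega

section SurfaceCode

open Equiv

variable (j : ℕ)

@[simp] lemma diagRefl1_inl (p : Fin j × Fin j) : diagRefl1 j (.inl p) = .inl p.swap := rfl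

@[simp] lemma diagRefl1_inr (p : Fin (j - 1) × Fin (j - 1)) :
    diagRefl1 j (.inr p) = .inr p.swap := rfl

@[simp] lemma diagRefl2_inl (p : Fin j × Fin j) :
    diagRefl2 j (.inl p) = .inl (p.2.rev, p.1.rev) := rfl

@[simp] lemma diagRefl2_inr (p : Fin (j - 1) × Fin (j - 1)) :
    diagRefl2 j (.inr p) = .inr (p.2.rev, p.1.rev) := rfl

lemma natCard_fixedBy_diagRefl1 : Nat.card (fixedBy (SqEdge j) (diagRefl1 j)) = j + (j - 1) := by
  rw [Nat.card_congr Equiv.subtypeSum, Nat.card_sum]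
  simp only [mem_fixedBy, Perm.smul_def, diagRefl1_inl, diagRefl1_inr, Sum.inl.injEq,
    Sum.inr.injEq]
  rw [natCard_fixed_swap, natCard_fixed_swap, Nat.card_fin, Nat.card_fin]

lemma natCard_fixedBy_diagRefl2 : Nat.card (fixedBy (SqEdge j) (diagRefl2 j)) = j + (j - 1) := by
  rw [Nat.card_congr Equiv.subtypeSum, Nat.card_sum]
  simp only [mem_fixedBy, Perm.smul_def, diagRefl2_inl, diagRefl2_inr, Sum.inl.injEq,
    Sum.inr.injEq]
  rw [natCard_fixed_swap_map Fin.rev_involutive, natCard_fixed_swap_map Fin.rev_involutive,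
    Nat.card_fin, Nat.card_fin]

variable {j}

lemma natCard_fixedBy_diagRefl1_mul_diagRefl2 (hj : 0 < j) :
    Nat.card (fixedBy (SqEdge j) (diagRefl1 j * diagRefl2 j)) = 1 := by
  rw [Nat.card_congr Equiv.subtypeSum, Nat.card_sum]
  simp only [mem_fixedBy, Perm.smul_def, Perm.mul_apply, diagRefl2_inl, diagRefl2_inr,
    diagRefl1_inl, diagRefl1_inr, Sum.inl.injEq, Sum.inr.injEq, Prod.swap_prod_mk]
  rw [natCard_fixed_map, natCard_fixed_map, Fin.natCard_rev_fixed, Fin.natCard_rev_fixed]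
  have : (j - 1) % 2 = 1 - j % 2 := by omega
  rcases Nat.mod_two_eq_zero_or_one j with h | h <;> simp [h, this]

lemma natCard_fixedPoints_reflGroup (hj : 0 < j) :
    Nat.card (fixedPoints (reflGroup j) (SqEdge j)) = 1 := by
  rw [reflGroup,
    Nat.card_congr (Equiv.subtypeEquivRight fun (_ : SqEdge j) => mem_fixedPoints_closure_iff),
    Nat.card_congr Equiv.subtypeSum, Nat.card_sum]
  simp only [Set.forall_mem_insert, Set.mem_singleton_iff, forall_eq, Perm.smul_def,
    diagRefl2_inl, diagRefl2_inr, diagRefl1_inl, diagRefl1_inr, Sum.inl.injEq, Sum.inr.injEq]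
  rw [natCard_fixed_swap_and_swap_map, natCard_fixed_swap_and_swap_map, Fin.natCard_rev_fixed,
    Fin.natCard_rev_fixed]
  omega

lemma isKleinFourGenerators_diagRefl (hj : 2 ≤ j) :
    IsKleinFourGenerators (diagRefl1 j) (diagRefl2 j) := by
  refine ⟨?_, ?_, ?_, fun h => ?_, fun h => ?_, fun h => ?_⟩
  · ext (p | p) <;> simp
  · ext (p | p) <;> simp
  · ext (p | p) <;> simp
  · simpa [Fin.ext_iff] using congr($h (.inl (⟨0, by omega⟩, ⟨1, by omega⟩) : SqEdge j))
  · have := congr($h (.inl (⟨0, by omega⟩, ⟨0, by omega⟩) : SqEdge j))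
    simp [Prod.ext_iff, Fin.ext_iff] at this
    omega
  · have := congr($h (.inl (⟨0, by omega⟩, ⟨0, by omega⟩) : SqEdge j))
    simp [Prod.ext_iff, Fin.ext_iff] at this
    omega

lemma natCard_orbitRel_quotient_reflGroup_mul_four (hj : 2 ≤ j) :
    Nat.card (orbitRel.Quotient (reflGroup j) (SqEdge j)) * 4 =
      Nat.card (SqEdge j) + 2 * (j + (j - 1)) + 1 := by
  have h := (isKleinFourGenerators_diagRefl hj).card_orbitRel_quotient_mul_four (X := SqEdge j)
  rw [natCard_fixedBy_diagRefl1, natCard_fixedBy_diagRefl2,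
    natCard_fixedBy_diagRefl1_mul_diagRefl2 (by omega)] at h
  rw [reflGroup, h]
  ring

end SurfaceCode

/-- The group generated by the two diagonal reflections of the `j×j` surface code
lattice is isomorphic to `ℤ₂ × ℤ₂`, and its action on the edges has exactly one orbit of
size `1`, exactly `2(j-1)` orbits of size `2`, all remaining orbits of size `4`, and
`j(j+1)/2` orbits in total. -/
theorem reflection_group_orbits (j : ℕ) (hj : 2 ≤ j) :
    Nonempty (reflGroup j ≃* Multiplicative (ZMod 2) × Multiplicative (ZMod 2)) ∧
    Nat.card {q : MulAction.orbitRel.Quotient (reflGroup j) (SqEdge j) |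
        Nat.card q.orbit = 1} = 1 ∧
    Nat.card {q : MulAction.orbitRel.Quotient (reflGroup j) (SqEdge j) |
        Nat.card q.orbit = 2} = 2 * (j - 1) ∧
    (∀ q : MulAction.orbitRel.Quotient (reflGroup j) (SqEdge j),
      Nat.card q.orbit = 1 ∨ Nat.card q.orbit = 2 ∨ Nat.card q.orbit = 4) ∧
    Nat.card (MulAction.orbitRel.Quotient (reflGroup j) (SqEdge j)) = j * (j + 1) / 2 := by
  have : IsKleinFour (reflGroup j) := (isKleinFourGenerators_diagRefl hj).isKleinFour
  have hsizes := natCard_orbitRel_quotient_orbit_eq_one_or_two_or_four (X := SqEdge j)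
    (IsKleinFour.card_four (G := reflGroup j))
  have hfixed : Nat.card {q : orbitRel.Quotient (reflGroup j) (SqEdge j) |
      Nat.card q.orbit = 1} = 1 := by
    rw [natCard_trivial_orbits_eq_natCard_fixedPoints, natCard_fixedPoints_reflGroup (by omega)]
  have hburnside := natCard_orbitRel_quotient_reflGroup_mul_four hj
  have : Fintype (orbitRel.Quotient (reflGroup j) (SqEdge j)) := Fintype.ofFinite _
  have hsplit := four_mul_natCard_eq_of_forall_eq_one_or_two_or_four _ hsizes
  rw [sum_natCard_orbitRel_quotient_orbit, hfixed] at hsplit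
  refine ⟨IsKleinFour.nonempty_mulEquiv.map (·.trans (MulEquiv.prodMultiplicative _ _)), hfixed,
    by omega, hsizes, ?_⟩
  obtain ⟨m, rfl⟩ : ∃ m, j = m + 1 := ⟨j - 1, by omega⟩
  simp only [Nat.card_sum, Nat.card_prod, Nat.card_fin, Nat.add_sub_cancel] at hburnside
  exact (Nat.div_eq_of_eq_mul_left two_pos (by linarith)).symm
end
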